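/- arXiv:2002.04411 — 4 statements merged into one kernel-verified Lean document; each statement's English description precedes it below -/
import Mathlib

section
/- Let G be obtained from two vertex-disjoint connected graphs G1 and G2 by identifying a fixed vertex u1 of G1 with a fixed vertex u2 of G2 (call the merged vertex u). Then N(G) = N(G1) + N(G2) − 1 + (N(G1)_{u1} − 1)(N(G2)_{u2} − 1). -/
open SimpleGraph

/-- Number of (nonempty) connected induced subgraphs of `G`. -/
noncomputable def numCIS {V : Type*} (G : SimpleGraph V) : ℕ :=
  Nat.card {s : Finset V // s.Nonempty ∧ (G.induce (↑s : Set V)).Connected}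

/-- Number of connected induced subgraphs of `G` containing the vertex `v`. -/
noncomputable def numCISat {V : Type*} (G : SimpleGraph V) (v : V) : ℕ :=
  Nat.card {s : Finset V // v ∈ s ∧ (G.induce (↑s : Set V)).Connected}

/-- Number of connected induced subgraphs of `G` containing both `u` and `v`. -/
noncomputable def numCISat2 {V : Type*} (G : SimpleGraph V) (u v : V) : ℕ :=
  Nat.card {s : Finset V // u ∈ s ∧ v ∈ s ∧ (G.induce (↑s : Set V)).Connected}

/-!
Split the connected sets `s` of `G` according to whether they contain the cut vertex `u`.
Since every edge leaving `A` (or `B`) starts at `u`, a connected `s` avoiding `u` lies inside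
`A` or inside `B`, and not both. A connected `s` through `u` corresponds bijectively to the pair
`(s ∩ A, s ∩ B)` of connected sets through `u`, with inverse `(p, q) ↦ p ∪ q`. Writing `a`, `b`
for the numbers of connected sets through `u` in `A`, `B` and `x`, `y` for those avoiding it,
`N(G) = ab + x + y`, `N(G₁) = a + x` and `N(G₂) = b + y`; the claim is then the identity
`ab = a + b - 1 + (a - 1)(b - 1)`, valid because `{u}` makes `a, b ≥ 1`.
-/

open Finset

lemma Finset.card_subtype_map_eq_card_filter_powerset {V : Type*} [DecidableEq V] (A : Finset V)
    (P : Finset V → Prop) [DecidablePred P] :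
    Nat.card {t : Finset (A : Set V) // P (t.map (Function.Embedding.subtype _))} =
      #(A.powerset.filter P) := by
  rw [← Nat.card_eq_finsetCard]
  have hsub (s : A.powerset.filter P) : ∀ x ∈ s.1, x ∈ (A : Set V) :=
    mem_powerset.mp (mem_filter.mp s.2).1
  refine Nat.card_congr
    { toFun := fun t => ⟨t.1.map (Function.Embedding.subtype _), ?_⟩
      invFun := fun s => ⟨s.1.subtype (· ∈ (A : Set V)), ?_⟩
      left_inv := fun t => ?_
      right_inv := fun s => ?_ }
  · exact mem_filter.mpr ⟨mem_powerset.mpr (coe_subset.mp (map_subtype_subset t.1)), t.2⟩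
  · rw [subtype_map_of_mem (hsub s)]
    exact (mem_filter.mp s.2).2
  · ext a
    simp
  · exact Subtype.ext (subtype_map_of_mem (hsub s))

namespace SimpleGraph

variable {V : Type*} (G : SimpleGraph V)

lemma connected_induce_induce_iff {A : Set V} {t : Set A} :
    ((G.induce A).induce t).Connected ↔ (G.induce (Subtype.val '' t)).Connected := by
  let f := (Embedding.induce (G := G) A).comp (Embedding.induce t)
  have hrange : Set.range f = Subtype.val '' t := by
    ext v
    constructor
    · rintro ⟨⟨a, hat⟩, rfl⟩
      exact ⟨a, hat, rfl⟩
    · rintro ⟨a, hat, rfl⟩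
      exact ⟨⟨a, hat⟩, rfl⟩
  rw [f.isoInduceRange.connected_iff, hrange]

lemma connected_induce_map_subtype_iff {A : Set V} (t : Finset A) :
    (G.induce (t.map (Function.Embedding.subtype _) : Set V)).Connected ↔
      ((G.induce A).induce (t : Set A)).Connected := by
  rw [coe_map, Function.Embedding.coe_subtype, connected_induce_induce_iff]

lemma nonempty_of_connected_induce {s : Finset V} (h : (G.induce (s : Set V)).Connected) :
    s.Nonempty :=
  coe_nonempty.mp (Set.nonempty_coe_sort.mp h.nonempty)

section Separation

variable {G} {u : V} {A s : Set V} (hsep : ∀ x ∈ A, ∀ y ∉ A, G.Adj x y → x = u)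
include hsep

lemma subset_of_preconnected_induce (hc : (G.induce s).Preconnected) (hus : u ∉ s) {x : V}
    (hxs : x ∈ s) (hxA : x ∈ A) : s ⊆ A := by
  intro y hys
  by_contra hyA
  obtain ⟨p⟩ := hc ⟨x, hxs⟩ ⟨y, hys⟩
  obtain ⟨d, -, hd, hd'⟩ := p.exists_boundary_dart {z | (z : V) ∈ A} hxA hyA
  exact hus (hsep _ hd _ hd' d.adj ▸ d.fst.2)

lemma reachable_induce_inter_of_walk (hu : u ∈ s ∩ A) {x y : s} (p : (G.induce s).Walk x y)
    (hy : (y : V) = u) (hx : (x : V) ∈ A) :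
    (G.induce (s ∩ A)).Reachable ⟨x, x.2, hx⟩ ⟨u, hu⟩ := by
  induction p with
  | @nil x => exact (Subtype.ext hy : (⟨x, x.2, hx⟩ : ↥(s ∩ A)) = ⟨u, hu⟩) ▸ .rfl
  | @cons x c y h q ih =>
    by_cases hxu : (x : V) = u
    · exact (Subtype.ext hxu : (⟨x, x.2, hx⟩ : ↥(s ∩ A)) = ⟨u, hu⟩) ▸ .rfl
    · have hcA : (c : V) ∈ A := by_contra fun hcA => hxu (hsep _ hx _ hcA h)
      have hadj : (G.induce (s ∩ A)).Adj ⟨x, x.2, hx⟩ ⟨c, c.2, hcA⟩ := h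
      exact hadj.reachable.trans (ih hy hcA)

lemma connected_induce_inter (hc : (G.induce s).Preconnected) (hus : u ∈ s) (huA : u ∈ A) :
    (G.induce (s ∩ A)).Connected := by
  rw [connected_iff_exists_forall_reachable]
  refine ⟨⟨u, hus, huA⟩, fun ⟨w, hws, hwA⟩ => ?_⟩
  obtain ⟨p⟩ := hc ⟨w, hws⟩ ⟨u, hus⟩
  exact (reachable_induce_inter_of_walk hsep ⟨hus, huA⟩ p rfl hwA).symm

end Separation

open Classical in
noncomputable def connectedSubsets (A : Finset V) : Finset (Finset V) :=
  A.powerset.filter fun s => (G.induce (s : Set V)).Connected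

section Counting

variable {G} {A B s : Finset V}

@[simp]
lemma mem_connectedSubsets :
    s ∈ connectedSubsets G A ↔ s ⊆ A ∧ (G.induce (s : Set V)).Connected := by
  simp [connectedSubsets]

lemma numCIS_eq_card_connectedSubsets_univ [Fintype V] :
    numCIS G = #(connectedSubsets G univ) := by
  rw [numCIS, ← Nat.card_eq_finsetCard]
  refine Nat.card_congr (Equiv.subtypeEquivRight fun s => ?_)
  simp only [mem_connectedSubsets, subset_univ, true_and]
  exact ⟨And.right, fun h => ⟨nonempty_of_connected_induce G h, h⟩⟩

variable [DecidableEq V]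

lemma card_filter_mem_connectedSubsets_pos {u : V} (hu : u ∈ A) :
    0 < #((connectedSubsets G A).filter (u ∈ ·)) := by
  refine card_pos.mpr ⟨{u}, ?_⟩
  simp only [mem_filter, mem_connectedSubsets, singleton_subset_iff, mem_singleton, and_true]
  rw [coe_singleton]
  exact ⟨hu, .of_subsingleton⟩

lemma numCIS_induce (A : Finset V) : numCIS (G.induce (A : Set V)) = #(connectedSubsets G A) := by
  classical
  rw [numCIS, connectedSubsets, ← card_subtype_map_eq_card_filter_powerset]
  refine Nat.card_congr (Equiv.subtypeEquivRight fun t => ?_)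
  rw [connected_induce_map_subtype_iff]
  exact ⟨And.right, fun h => ⟨nonempty_of_connected_induce _ h, h⟩⟩

lemma numCISat_induce {u : V} (hu : u ∈ (A : Set V)) :
    numCISat (G.induce (A : Set V)) ⟨u, hu⟩ = #((connectedSubsets G A).filter (u ∈ ·)) := by
  classical
  rw [numCISat, connectedSubsets, filter_filter, ← card_subtype_map_eq_card_filter_powerset]
  refine Nat.card_congr (Equiv.subtypeEquivRight fun t => ?_)
  rw [connected_induce_map_subtype_iff]
  exact and_comm.trans (and_congr_right' (mem_map' _).symm)

variable {u : V} (hA : ∀ x ∈ A, ∀ y ∉ A, G.Adj x y → x = u)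
  (hB : ∀ x ∈ B, ∀ y ∉ B, G.Adj x y → x = u) (hAB : A ∩ B = {u})
include hA hB hAB

lemma card_filter_mem_connectedSubsets_union :
    #((connectedSubsets G (A ∪ B)).filter (u ∈ ·)) =
      #((connectedSubsets G A).filter (u ∈ ·)) * #((connectedSubsets G B).filter (u ∈ ·)) := by
  obtain ⟨huA, huB⟩ := mem_inter.mp (hAB ▸ mem_singleton_self u)
  rw [← card_product]
  refine card_nbij' (fun s => (s ∩ A, s ∩ B)) (fun p => p.1 ∪ p.2) ?_ ?_ ?_ ?_
  · intro s hs
    simp only [coe_filter, mem_connectedSubsets, Set.mem_ofPred_eq] at hs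
    obtain ⟨⟨-, hc⟩, hus⟩ := hs
    simp only [coe_product, coe_filter, mem_connectedSubsets, Set.mem_prod, Set.mem_ofPred_eq,
      inter_subset_right, mem_inter, true_and]
    rw [coe_inter, coe_inter]
    exact ⟨⟨connected_induce_inter hA hc.preconnected hus huA, hus, huA⟩,
      ⟨connected_induce_inter hB hc.preconnected hus huB, hus, huB⟩⟩
  · rintro ⟨p, q⟩ h
    simp only [coe_product, coe_filter, mem_connectedSubsets, Set.mem_prod,
      Set.mem_ofPred_eq] at h
    obtain ⟨⟨⟨hpA, hp⟩, hup⟩, ⟨⟨hqB, hq⟩, huq⟩⟩ := h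
    simp only [coe_filter, mem_connectedSubsets, Set.mem_ofPred_eq, mem_union]
    rw [coe_union]
    exact ⟨⟨union_subset_union hpA hqB,
      induce_union_connected hp.preconnected hq.preconnected ⟨u, hup, huq⟩⟩, .inl hup⟩
  · intro s hs
    simp only [coe_filter, mem_connectedSubsets, Set.mem_ofPred_eq] at hs
    simp only [← inter_union_distrib_left, inter_eq_left.mpr hs.1.1]
  · rintro ⟨p, q⟩ h
    simp only [coe_product, coe_filter, mem_connectedSubsets, Set.mem_prod,
      Set.mem_ofPred_eq] at h
    obtain ⟨⟨⟨hpA, -⟩, hup⟩, ⟨⟨hqB, -⟩, huq⟩⟩ := h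
    have hAB' (x : V) (hxA : x ∈ A) (hxB : x ∈ B) : x = u :=
      mem_singleton.mp (hAB ▸ mem_inter.mpr ⟨hxA, hxB⟩)
    ext x
    · simp only [mem_inter, mem_union]
      grind
    · simp only [mem_inter, mem_union]
      grind

lemma card_filter_not_mem_connectedSubsets_union :
    #((connectedSubsets G (A ∪ B)).filter (u ∉ ·)) =
      #((connectedSubsets G A).filter (u ∉ ·)) + #((connectedSubsets G B).filter (u ∉ ·)) := by
  rw [← card_union_of_disjoint]
  · congr 1
    ext s
    simp only [mem_filter, mem_connectedSubsets, mem_union]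
    constructor
    · rintro ⟨⟨hsub, hc⟩, hus⟩
      obtain ⟨x, hx⟩ := nonempty_of_connected_induce G hc
      rcases mem_union.mp (hsub hx) with hxA | hxB
      · exact .inl ⟨⟨coe_subset.mp (subset_of_preconnected_induce hA hc.preconnected hus hx hxA),
          hc⟩, hus⟩
      · exact .inr ⟨⟨coe_subset.mp (subset_of_preconnected_induce hB hc.preconnected hus hx hxB),
          hc⟩, hus⟩
    · rintro (⟨⟨hsub, hc⟩, hus⟩ | ⟨⟨hsub, hc⟩, hus⟩)
      · exact ⟨⟨hsub.trans subset_union_left, hc⟩, hus⟩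
      · exact ⟨⟨hsub.trans subset_union_right, hc⟩, hus⟩
  · rw [Finset.disjoint_left]
    simp only [mem_filter, mem_connectedSubsets]
    rintro s ⟨⟨hsA, hc⟩, hus⟩ ⟨⟨hsB, -⟩, -⟩
    obtain ⟨x, hx⟩ := nonempty_of_connected_induce G hc
    have hxu : x ∈ A ∩ B := mem_inter.mpr ⟨hsA hx, hsB hx⟩
    rw [hAB, mem_singleton] at hxu
    exact hus (hxu ▸ hx)

end Counting

end SimpleGraph

lemma Nat.mul_add_add_eq_of_pos {a b x y : ℕ} (ha : 0 < a) (hb : 0 < b) :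
    a * b + (x + y) = a + x + (b + y) - 1 + (a - 1) * (b - 1) := by
  obtain ⟨a, rfl⟩ : ∃ k, a = k + 1 := ⟨a - 1, by omega⟩
  obtain ⟨b, rfl⟩ : ∃ k, b = k + 1 := ⟨b - 1, by omega⟩
  rw [show a + 1 + x + (b + 1 + y) - 1 = a + x + b + y + 1 by omega, Nat.add_sub_cancel,
    Nat.add_sub_cancel]
  ring

theorem numCIS_merge_general {V : Type*} [Fintype V] [DecidableEq V] (G : SimpleGraph V) (u : V)
    (A B : Finset V) (hcover : A ∪ B = Finset.univ) (hinter : A ∩ B = {u})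
    (huA : u ∈ A) (huB : u ∈ B)
    (hedges : ∀ x ∈ A, ∀ y ∈ B, G.Adj x y → x = u ∨ y = u) :
    numCIS G = numCIS (G.induce (↑A : Set V)) + numCIS (G.induce (↑B : Set V)) - 1 +
      (numCISat (G.induce (↑A : Set V)) ⟨u, Finset.mem_coe.mpr huA⟩ - 1) *
      (numCISat (G.induce (↑B : Set V)) ⟨u, Finset.mem_coe.mpr huB⟩ - 1) := by
  have hmem (y : V) : y ∈ A ∨ y ∈ B := mem_union.mp (hcover ▸ mem_univ y)
  have hsepA (x : V) (hx : x ∈ A) (y : V) (hy : y ∉ A) (hxy : G.Adj x y) : x = u :=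
    (hedges x hx y ((hmem y).resolve_left hy) hxy).resolve_right
      (by rintro rfl; exact hy huA)
  have hsepB (x : V) (hx : x ∈ B) (y : V) (hy : y ∉ B) (hxy : G.Adj x y) : x = u :=
    (hedges y ((hmem y).resolve_right hy) x hx hxy.symm).resolve_left
      (by rintro rfl; exact hy huB)
  rw [numCIS_eq_card_connectedSubsets_univ, ← hcover, numCIS_induce, numCIS_induce,
    numCISat_induce, numCISat_induce,
    ← card_filter_add_card_filter_not (s := connectedSubsets G (A ∪ B)) (u ∈ ·),
    ← card_filter_add_card_filter_not (s := connectedSubsets G A) (u ∈ ·),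
    ← card_filter_add_card_filter_not (s := connectedSubsets G B) (u ∈ ·),
    card_filter_mem_connectedSubsets_union hsepA hsepB hinter,
    card_filter_not_mem_connectedSubsets_union hsepA hsepB hinter]
  exact Nat.mul_add_add_eq_of_pos (card_filter_mem_connectedSubsets_pos huA)
    (card_filter_mem_connectedSubsets_pos huB)

/-- If `G` is obtained from two vertex-disjoint connected graphs `G1 = G.induce A` and
`G2 = G.induce B` by identifying a vertex of the first with a vertex of the second (the
merged vertex being `u`), then
`N(G) = N(G1) + N(G2) - 1 + (N(G1)_u - 1) * (N(G2)_u - 1)`. -/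
theorem numCIS_merge {V : Type*} [Fintype V] [DecidableEq V] (G : SimpleGraph V) (u : V)
    (A B : Finset V) (hcover : A ∪ B = Finset.univ) (hinter : A ∩ B = {u})
    (huA : u ∈ A) (huB : u ∈ B)
    (hedges : ∀ x ∈ A, ∀ y ∈ B, G.Adj x y → x = u ∨ y = u)
    (h1 : (G.induce (↑A : Set V)).Connected) (h2 : (G.induce (↑B : Set V)).Connected) :
    numCIS G = numCIS (G.induce (↑A : Set V)) + numCIS (G.induce (↑B : Set V)) - 1 +
      (numCISat (G.induce (↑A : Set V)) ⟨u, Finset.mem_coe.mpr huA⟩ - 1) *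
      (numCISat (G.induce (↑B : Set V)) ⟨u, Finset.mem_coe.mpr huB⟩ - 1) :=
  numCIS_merge_general G u A B hcover hinter huA huB hedges
end

section
/- Let H be a connected graph with an edge uv, and for positive integers n1, n2 let H(n1;n2) be obtained from H by attaching a pendant path of order n1 at u and a pendant path of order n2 at v (identifying u with an endvertex of P_{n1} and v with an endvertex of P_{n2}). Then N(H(n1;n2)) = n1·n2·N(H)_{u,v} + n1·N(H−v)_u + n2·N(H−u)_v + C(n1,2) + C(n2,2) + N(H−u−v), where C(k,2) is the binomial coefficient k choose 2. -/
open SimpleGraph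

/-- Attach a pendant path with `k` new vertices at the vertex `u` of `G`
(so the resulting pendant path "of order `k + 1`" starts at `u`). -/
def attachPath {V : Type*} (G : SimpleGraph V) (u : V) (k : ℕ) :
    SimpleGraph (V ⊕ Fin k) :=
  SimpleGraph.fromRel (fun a b =>
    (∃ x y, a = Sum.inl x ∧ b = Sum.inl y ∧ G.Adj x y) ∨
    (∃ i j : Fin k, a = Sum.inr i ∧ b = Sum.inr j ∧ (i : ℕ) + 1 = (j : ℕ)) ∨
    (∃ h : 0 < k, a = Sum.inl u ∧ b = Sum.inr ⟨0, h⟩))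

/-! Splitting on a vertex `w`, the connected sets of `G` are those through `w` and those of
`G - w`. If `w` is a leaf with neighbour `x`, the connected sets through `w` other than `{w}` are
exactly the sets `insert w S` with `S` a connected set of `G - w` containing `x`. Attaching the
pendant path one vertex at a time, each new vertex is such a leaf, and induction gives
`N(G + P) = N(G) + k N(G)_u + C(k + 1, 2)` and `N(G + P)_w = N(G)_w + k N(G)_{u,w}` for a path with
`k` new vertices attached at `u`. Applying this to both paths and splitting `N(H)`, `N(H)_u` and
`N(H)_v` along `u` and `v` leaves the stated formula. -/

noncomputable def Finset.equivSubsetRange {V W : Type*} (f : V ↪ W) :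
    Finset V ≃ {s : Finset W // (s : Set W) ⊆ Set.range f} where
  toFun A := ⟨A.map f, Finset.coe_map_subset_range f A⟩
  invFun s := s.1.preimage f f.injective.injOn
  left_inv A := by ext; simp
  right_inv s := by
    ext y
    simp only [Finset.mem_map, Finset.mem_preimage]
    constructor
    · rintro ⟨x, hx, rfl⟩
      exact hx
    · intro hy
      obtain ⟨x, rfl⟩ := s.2 hy
      exact ⟨x, hy, rfl⟩

lemma Nat.card_subtype_eq_add_card_subtype {α : Type*} [Finite α] (P Q : α → Prop) :
    Nat.card {a // P a} = Nat.card {a // P a ∧ Q a} + Nat.card {a // P a ∧ ¬Q a} := by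
  classical
  rw [← Nat.card_sum]
  exact Nat.card_congr ((Equiv.sumCompl fun a : {a // P a} => Q a).symm.trans
    (Equiv.sumCongr (Equiv.subtypeSubtypeEquivSubtypeInter P Q)
      (Equiv.subtypeSubtypeEquivSubtypeInter P (¬Q ·))))

lemma Finset.card_subtype_mem_eq_card_subtype_insert {V : Type*} [DecidableEq V] (w : V)
    (P : Finset V → Prop) :
    Nat.card {s : Finset V // w ∈ s ∧ P s} =
      Nat.card {t : Finset V // (t : Set V) ⊆ {w}ᶜ ∧ P (insert w t)} :=
  Nat.card_congr
    { toFun s := ⟨s.1.erase w, by simp, by rw [Finset.insert_erase s.2.1]; exact s.2.2⟩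
      invFun t := ⟨insert w t.1, Finset.mem_insert_self w t.1, t.2.2⟩
      left_inv s := Subtype.ext (Finset.insert_erase s.2.1)
      right_inv t := Subtype.ext (Finset.erase_insert (Set.subset_compl_singleton_iff.1 t.2.1)) }

namespace SimpleGraph

section Transport

variable {V W X : Type*} {G : SimpleGraph V} {G' : SimpleGraph W} {G'' : SimpleGraph X}

noncomputable def Embedding.induceImage (f : G ↪g G') (s : Set V) :
    G.induce s ≃g G'.induce (f '' s) where
  toEquiv := Equiv.Set.image f s f.injective
  map_rel_iff' := by simp

@[simp] lemma Embedding.range_induce (S : Set V) : Set.range (Embedding.induce (G := G) S) = S :=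
  Subtype.range_coe

lemma Embedding.card_connected_map (f : G ↪g G') (P : Finset W → Prop) :
    Nat.card {A : Finset V // P (A.map f.toEmbedding) ∧ (G.induce (A : Set V)).Connected} =
      Nat.card {s : Finset W //
        (s : Set W) ⊆ Set.range f ∧ P s ∧ (G'.induce (s : Set W)).Connected} := by
  refine Nat.card_congr ((Finset.equivSubsetRange f.toEmbedding).subtypeEquiv (fun A => ?_)
    |>.trans (Equiv.subtypeSubtypeEquivSubtypeInter _ _))
  refine and_congr_right fun _ => ?_
  simp only [Finset.equivSubsetRange, Equiv.coe_fn_mk]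
  rw [Finset.coe_map]
  exact (f.induceImage A).connected_iff

lemma Embedding.numCIS_eq (f : G ↪g G') :
    numCIS G = Nat.card {s : Finset W //
      (s : Set W) ⊆ Set.range f ∧ s.Nonempty ∧ (G'.induce (s : Set W)).Connected} := by
  simpa [numCIS] using f.card_connected_map Finset.Nonempty

lemma Embedding.numCISat_eq (f : G ↪g G') (v : V) :
    numCISat G v = Nat.card {s : Finset W //
      (s : Set W) ⊆ Set.range f ∧ f v ∈ s ∧ (G'.induce (s : Set W)).Connected} := by
  simpa [numCISat] using f.card_connected_map (f v ∈ ·)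

lemma Embedding.numCISat2_eq (f : G ↪g G') (v w : V) :
    numCISat2 G v w = Nat.card {s : Finset W //
      (s : Set W) ⊆ Set.range f ∧ (f v ∈ s ∧ f w ∈ s) ∧ (G'.induce (s : Set W)).Connected} := by
  simpa [numCISat2, and_assoc] using f.card_connected_map (fun s => f v ∈ s ∧ f w ∈ s)

lemma Iso.numCIS_eq (e : G ≃g G') : numCIS G = numCIS G' := by
  rw [e.toEmbedding.numCIS_eq]
  simp [numCIS, e.surjective.range_eq]

lemma Iso.numCISat_eq (e : G ≃g G') (v : V) : numCISat G v = numCISat G' (e v) := by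
  rw [e.toEmbedding.numCISat_eq]
  simp [numCISat, e.surjective.range_eq]

lemma numCIS_eq_of_range_eq (f : G ↪g G'') (g : G' ↪g G'') (h : Set.range f = Set.range g) :
    numCIS G = numCIS G' := by
  rw [f.numCIS_eq, g.numCIS_eq, h]

lemma numCIS_induce_s4 (S : Set V) :
    numCIS (G.induce S) = Nat.card {s : Finset V //
      (s : Set V) ⊆ S ∧ s.Nonempty ∧ (G.induce (s : Set V)).Connected} := by
  simpa using (Embedding.induce (G := G) S).numCIS_eq

lemma numCISat_induce_s4 (S : Set V) (x : S) :
    numCISat (G.induce S) x = Nat.card {s : Finset V //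
      (s : Set V) ⊆ S ∧ ↑x ∈ s ∧ (G.induce (s : Set V)).Connected} := by
  simpa using (Embedding.induce (G := G) S).numCISat_eq x

lemma numCIS_induce_compl_induce_compl {u v : V} (hv : v ∈ ({u}ᶜ : Set V)) :
    numCIS ((G.induce {u}ᶜ).induce {⟨v, hv⟩}ᶜ) = numCIS (G.induce {u, v}ᶜ) := by
  refine numCIS_eq_of_range_eq ((Embedding.induce _).comp (Embedding.induce _))
    (Embedding.induce _) ?_
  rw [Embedding.range_induce]
  ext x
  constructor
  · rintro ⟨⟨⟨a, ha⟩, hb⟩, rfl⟩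
    exact fun h => h.elim ha fun h => hb (Subtype.ext h)
  · intro hx
    rw [Set.mem_compl_iff, Set.mem_insert_iff, not_or] at hx
    exact ⟨⟨⟨x, hx.1⟩, fun h => hx.2 (congrArg Subtype.val h)⟩, rfl⟩

end Transport

section Split

variable {V : Type*} [Finite V] {G : SimpleGraph V}

lemma numCIS_eq_numCISat_add_card (w : V) :
    numCIS G = numCISat G w + Nat.card {s : Finset V //
      (s : Set V) ⊆ {w}ᶜ ∧ s.Nonempty ∧ (G.induce (s : Set V)).Connected} := by
  rw [numCIS, Nat.card_subtype_eq_add_card_subtype _ (w ∈ ·)]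
  congr 1 <;> refine Nat.card_congr (Equiv.subtypeEquivRight fun s => ?_)
  · exact ⟨fun h => ⟨h.2, h.1.2⟩, fun h => ⟨⟨⟨w, h.1⟩, h.2⟩, h.1⟩⟩
  · rw [Set.subset_compl_singleton_iff, Finset.mem_coe]
    tauto

lemma numCISat_eq_numCISat2_add_card (x w : V) :
    numCISat G x = numCISat2 G x w + Nat.card {s : Finset V //
      (s : Set V) ⊆ {w}ᶜ ∧ x ∈ s ∧ (G.induce (s : Set V)).Connected} := by
  rw [numCISat, Nat.card_subtype_eq_add_card_subtype _ (w ∈ ·)]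
  congr 1 <;> refine Nat.card_congr (Equiv.subtypeEquivRight fun s => ?_)
  · tauto
  · rw [Set.subset_compl_singleton_iff, Finset.mem_coe]
    tauto

lemma numCIS_eq_numCISat_add_numCIS_induce_compl (w : V) :
    numCIS G = numCISat G w + numCIS (G.induce {w}ᶜ) := by
  rw [numCIS_eq_numCISat_add_card w, numCIS_induce_s4]

lemma numCISat_eq_numCISat2_add_numCISat_induce_compl {x w : V} (hx : x ∈ ({w}ᶜ : Set V)) :
    numCISat G x = numCISat2 G x w + numCISat (G.induce {w}ᶜ) ⟨x, hx⟩ := by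
  rw [numCISat_eq_numCISat2_add_card x w, numCISat_induce_s4]

end Split

section Leaf

variable {V : Type*} {G : SimpleGraph V} {w x : V}

lemma numCISat2_comm (v w : V) : numCISat2 G v w = numCISat2 G w v :=
  Nat.card_congr (Equiv.subtypeEquivRight fun _ => by tauto)

lemma connected_induce_singleton (v : V) : (G.induce {v}).Connected := by
  rw [induce_singleton_eq_top]
  exact connected_top

lemma Preconnected.induce_of_insert_leaf (hleaf : ∀ y, G.Adj w y ↔ y = x) {t : Set V}
    (hw : w ∉ t) (hc : (G.induce (insert w t)).Preconnected) : (G.induce t).Preconnected := by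
  have hpre := hc.induce_of_degree_eq_one (s := {⟨w, Set.mem_insert w t⟩}ᶜ) <| by
    intro v hv
    rw [Set.notMem_compl_iff, Set.mem_singleton_iff] at hv
    subst hv
    rw [neighborSet_induce]
    refine Set.Subsingleton.preimage ?_ Subtype.val_injective
    simp [Set.Subsingleton, mem_neighborSet, hleaf]
  have himage : Embedding.induce (G := G) (insert w t) '' {⟨w, Set.mem_insert w t⟩}ᶜ = t := by
    ext z
    constructor
    · rintro ⟨⟨z, hz⟩, hne, rfl⟩
      exact hz.resolve_left fun h => hne (Subtype.ext h)
    · intro hz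
      exact ⟨⟨z, Set.mem_insert_of_mem w hz⟩, by rintro ⟨⟩; exact hw hz, rfl⟩
  have := ((Embedding.induce _).induceImage _).preconnected_iff.1 hpre
  rwa [himage] at this

lemma connected_induce_insert_of_leaf (hleaf : ∀ y, G.Adj w y ↔ y = x) {t : Set V}
    (hw : w ∉ t) (ht : t.Nonempty) :
    (G.induce (insert w t)).Connected ↔ x ∈ t ∧ (G.induce t).Connected := by
  constructor
  · intro hc
    obtain ⟨a, ha⟩ := ht
    have : Nontrivial ↥(insert w t) :=
      nontrivial_of_ne ⟨w, Set.mem_insert w t⟩ ⟨a, Set.mem_insert_of_mem w ha⟩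
        (by rintro ⟨⟩; exact hw ha)
    obtain ⟨⟨y, hy⟩, hwy⟩ := hc.preconnected.exists_adj_of_nontrivial ⟨w, Set.mem_insert w t⟩
    obtain rfl : y = x := (hleaf y).1 hwy
    exact ⟨hy.resolve_left (G.ne_of_adj hwy).symm,
      (connected_iff _).2 ⟨hc.preconnected.induce_of_insert_leaf hleaf hw, ⟨a, ha⟩⟩⟩
  · rintro ⟨hx, hc⟩
    rw [← Set.union_singleton]
    exact connected_induce_union hc.preconnected (connected_induce_singleton w).preconnected hx rfl
      (G.adj_symm ((hleaf x).2 rfl))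

lemma numCISat_of_leaf [Finite V] (hleaf : ∀ y, G.Adj w y ↔ y = x) :
    numCISat G w = Nat.card {t : Finset V //
      (t : Set V) ⊆ {w}ᶜ ∧ x ∈ t ∧ (G.induce (t : Set V)).Connected} + 1 := by
  classical
  rw [numCISat, Finset.card_subtype_mem_eq_card_subtype_insert,
    Nat.card_subtype_eq_add_card_subtype _ Finset.Nonempty]
  congr 1
  · refine Nat.card_congr (Equiv.subtypeEquivRight fun t => ?_)
    rw [Set.subset_compl_singleton_iff, Finset.coe_insert]
    constructor
    · rintro ⟨⟨hw, hc⟩, ht⟩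
      exact ⟨hw, (connected_induce_insert_of_leaf hleaf hw ht).1 hc⟩
    · rintro ⟨hw, hx, hc⟩
      exact ⟨⟨hw, (connected_induce_insert_of_leaf hleaf hw ⟨x, hx⟩).2 ⟨hx, hc⟩⟩, ⟨x, hx⟩⟩
  · -- only `t = ∅`, i.e. the set `{w}`, remains
    refine Nat.card_eq_one_iff_unique.2 ⟨⟨fun a b => Subtype.ext ?_⟩, ⟨⟨∅, ?_⟩⟩⟩
    · rw [Finset.not_nonempty_iff_eq_empty.1 a.2.2, Finset.not_nonempty_iff_eq_empty.1 b.2.2]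
    · refine ⟨⟨by simp, ?_⟩, Finset.not_nonempty_empty⟩
      rw [insert_empty_eq, Finset.coe_singleton]
      exact connected_induce_singleton w

lemma numCISat2_of_leaf (hleaf : ∀ y, G.Adj w y ↔ y = x) {y : V} (hy : y ≠ w) :
    numCISat2 G w y = Nat.card {t : Finset V //
      (t : Set V) ⊆ {w}ᶜ ∧ (x ∈ t ∧ y ∈ t) ∧ (G.induce (t : Set V)).Connected} := by
  classical
  rw [numCISat2, Finset.card_subtype_mem_eq_card_subtype_insert]
  refine Nat.card_congr (Equiv.subtypeEquivRight fun t => ?_)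
  rw [Set.subset_compl_singleton_iff, Finset.coe_insert, Finset.mem_insert, or_iff_right hy]
  refine and_congr_right fun hw => ⟨?_, ?_⟩
  · rintro ⟨hy, hc⟩
    obtain ⟨hx, hc⟩ := (connected_induce_insert_of_leaf hleaf hw ⟨y, hy⟩).1 hc
    exact ⟨⟨hx, hy⟩, hc⟩
  · rintro ⟨⟨hx, hy⟩, hc⟩
    exact ⟨hy, (connected_induce_insert_of_leaf hleaf hw ⟨y, hy⟩).2 ⟨hx, hc⟩⟩

end Leaf

section PendantPath

variable {V : Type*} {G : SimpleGraph V} {u : V} {k : ℕ}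

@[simp] lemma attachPath_adj_inl_inl {x y : V} :
    (attachPath G u k).Adj (.inl x) (.inl y) ↔ G.Adj x y := by
  simp [attachPath, G.adj_comm y x]
  exact fun h => h.ne

@[simp] lemma attachPath_adj_inl_inr {x : V} {i : Fin k} :
    (attachPath G u k).Adj (.inl x) (.inr i) ↔ x = u ∧ (i : ℕ) = 0 := by
  simp [attachPath, Fin.ext_iff]
  exact fun _ _ => i.pos

@[simp] lemma attachPath_adj_inr_inl {x : V} {i : Fin k} :
    (attachPath G u k).Adj (.inr i) (.inl x) ↔ x = u ∧ (i : ℕ) = 0 := by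
  rw [adj_comm, attachPath_adj_inl_inr]

@[simp] lemma attachPath_adj_inr_inr {i j : Fin k} :
    (attachPath G u k).Adj (.inr i) (.inr j) ↔ (i : ℕ) + 1 = j ∨ (j : ℕ) + 1 = i := by
  simp [attachPath, Fin.ext_iff]
  grind

lemma attachPath_one_adj_inr_zero_iff (y : V ⊕ Fin 1) :
    (attachPath G u 1).Adj (.inr 0) y ↔ y = .inl u := by
  rcases y with y | j
  · simp [eq_comm]
  · simp [Subsingleton.elim j 0]

def attachPathInl (G : SimpleGraph V) (u : V) (k : ℕ) : G ↪g attachPath G u k where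
  toEmbedding := ⟨Sum.inl, Sum.inl_injective⟩
  map_rel_iff' := attachPath_adj_inl_inl

lemma range_attachPathInl_one : Set.range (attachPathInl G u 1) = {.inr 0}ᶜ := by
  change Set.range Sum.inl = _
  rw [← Set.compl_range_inr, Set.range_unique]
  rfl

def attachPathZeroIso (G : SimpleGraph V) (u : V) : attachPath G u 0 ≃g G where
  toEquiv := Equiv.sumEmpty V (Fin 0)
  map_rel_iff' := by
    rintro (x | i) (y | j)
    · exact attachPath_adj_inl_inl.symm
    all_goals exact Fin.elim0 ‹_›

def attachPathSuccIso (G : SimpleGraph V) (u : V) (k : ℕ) :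
    attachPath G u (k + 1) ≃g attachPath (attachPath G u 1) (.inr 0) k where
  toFun := Sum.elim (.inl ∘ .inl) (Fin.cases (.inl (.inr 0)) .inr)
  invFun := Sum.elim (Sum.elim .inl fun _ => .inr 0) (.inr ∘ Fin.succ)
  left_inv a := by
    rcases a with x | i
    · rfl
    · cases i using Fin.cases <;> rfl
  right_inv a := by
    rcases a with (x | i) | j
    · rfl
    · simp [Subsingleton.elim i 0]
    · rfl
  map_rel_iff' {a b} := by
    rcases a with x | i <;> rcases b with y | j
    · simp
    · cases j using Fin.cases <;> simp
    · cases i using Fin.cases <;> simp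
    · cases i using Fin.cases <;> cases j using Fin.cases <;> simp

variable (G u)

lemma numCISat2_attachPath_one_inr (w : V) :
    numCISat2 (attachPath G u 1) (.inr 0) (.inl w) = numCISat2 G u w := by
  rw [numCISat2_of_leaf attachPath_one_adj_inr_zero_iff Sum.inl_ne_inr,
    (attachPathInl G u 1).numCISat2_eq, range_attachPathInl_one]
  rfl

variable [Finite V]

lemma numCISat_attachPath_one_inr :
    numCISat (attachPath G u 1) (.inr 0) = numCISat G u + 1 := by
  rw [numCISat_of_leaf attachPath_one_adj_inr_zero_iff, (attachPathInl G u 1).numCISat_eq,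
    range_attachPathInl_one]
  rfl

lemma numCIS_attachPath_one :
    numCIS (attachPath G u 1) = numCIS G + numCISat G u + 1 := by
  rw [numCIS_eq_numCISat_add_card (.inr 0), numCISat_attachPath_one_inr,
    (attachPathInl G u 1).numCIS_eq, range_attachPathInl_one]
  omega

lemma numCISat_attachPath_one_inl (w : V) :
    numCISat (attachPath G u 1) (.inl w) = numCISat G w + numCISat2 G u w := by
  rw [numCISat_eq_numCISat2_add_card _ (.inr 0), numCISat2_comm, numCISat2_attachPath_one_inr,
    (attachPathInl G u 1).numCISat_eq, range_attachPathInl_one, add_comm]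
  rfl

theorem numCIS_attachPath (k : ℕ) :
    numCIS (attachPath G u k) = numCIS G + k * numCISat G u + (k + 1).choose 2 := by
  induction k generalizing V with
  | zero => simp [(attachPathZeroIso G u).numCIS_eq]
  | succ k ih =>
    rw [(attachPathSuccIso G u k).numCIS_eq, ih, numCIS_attachPath_one,
      numCISat_attachPath_one_inr, Nat.choose_succ_succ (k + 1), Nat.choose_one_right]
    ring

theorem numCISat_attachPath_inl (k : ℕ) (w : V) :
    numCISat (attachPath G u k) (.inl w) = numCISat G w + k * numCISat2 G u w := by
  induction k generalizing V with
  | zero =>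
    rw [(attachPathZeroIso G u).numCISat_eq, zero_mul, add_zero]
    rfl
  | succ k ih =>
    rw [(attachPathSuccIso G u k).numCISat_eq]
    change numCISat _ (Sum.inl (Sum.inl w)) = _
    rw [ih, numCISat_attachPath_one_inl, numCISat2_attachPath_one_inr]
    ring

end PendantPath

end SimpleGraph

/-- The count of connected induced subgraphs of `H(n1; n2)`, obtained from `H` by
attaching pendant paths of orders `n1` and `n2` at the adjacent vertices `u` and `v`
(each order counts the attachment vertex, so `n1 - 1`, resp. `n2 - 1`, new vertices are
added). -/
theorem numCIS_H_n1_n2 {V : Type*} [Fintype V] (H : SimpleGraph V)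
    (u v : V) (huv : H.Adj u v) (n1 n2 : ℕ) (h1 : 1 ≤ n1) (h2 : 1 ≤ n2) :
    numCIS (attachPath (attachPath H u (n1 - 1)) (Sum.inl v) (n2 - 1)) =
      n1 * n2 * numCISat2 H u v
      + n1 * numCISat (H.induce ({v}ᶜ : Set V)) ⟨u, by simp [huv.ne]⟩
      + n2 * numCISat (H.induce ({u}ᶜ : Set V)) ⟨v, by simp [huv.ne']⟩
      + n1.choose 2 + n2.choose 2
      + numCIS (H.induce (({u, v}ᶜ : Set V))) := by
  obtain ⟨k1, rfl⟩ := Nat.exists_eq_add_of_le' h1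
  obtain ⟨k2, rfl⟩ := Nat.exists_eq_add_of_le' h2
  have hu : u ∈ ({v}ᶜ : Set V) := by simp [huv.ne]
  have hv : v ∈ ({u}ᶜ : Set V) := by simp [huv.ne']
  rw [Nat.add_sub_cancel, Nat.add_sub_cancel, numCIS_attachPath, numCISat_attachPath_inl,
    numCIS_attachPath, numCIS_eq_numCISat_add_numCIS_induce_compl u,
    numCIS_eq_numCISat_add_numCIS_induce_compl (G := H.induce {u}ᶜ) ⟨v, hv⟩,
    numCIS_induce_compl_induce_compl, numCISat_eq_numCISat2_add_numCISat_induce_compl hu,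
    numCISat_eq_numCISat2_add_numCISat_induce_compl hv, numCISat2_comm v u]
  ring
end

section
/- Let G0, G1, G2 be pairwise vertex-disjoint connected graphs with fixed vertices v0 ∈ V(G0), v1 ∈ V(G1), v2 ∈ V(G2), and let G be obtained by adding the edges v0v1, v1v2, v2v0. Then N(G) = N(G0−v0) + N(G1−v1) + N(G2−v2) + (1+N(G0)_{v0})(1+N(G1)_{v1})(1+N(G2)_{v2}) − 1. -/
open SimpleGraph

/-- Given `g` pairwise disjoint graphs `G i` with distinguished vertices `v i`, the graph on
their disjoint union obtained by adding the edge `(v i)(v j)` whenever `E i j` holds. -/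
def graphsJoin {g : ℕ} {V : Fin g → Type*} (G : ∀ i, SimpleGraph (V i)) (v : ∀ i, V i)
    (E : Fin g → Fin g → Prop) : SimpleGraph (Σ i, V i) :=
  SimpleGraph.fromRel (fun a b =>
    (∃ (i : Fin g) (x y : V i), a = ⟨i, x⟩ ∧ b = ⟨i, y⟩ ∧ (G i).Adj x y) ∨
    (∃ i j : Fin g, E i j ∧ a = ⟨i, v i⟩ ∧ b = ⟨j, v j⟩))

namespace TJP

variable {V : Fin 3 → Type*} [∀ i, Fintype (V i)] (G : ∀ i, SimpleGraph (V i)) (v : ∀ i, V i)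

/-- The triangle join. -/
def H (G : ∀ i, SimpleGraph (V i)) (v : ∀ i, V i) : SimpleGraph (Σ i, V i) :=
  graphsJoin G v (fun i j => ((i : ℕ) + 1) % 3 = (j : ℕ))

lemma adj_iff {a b : Σ i, V i} :
    (H G v).Adj a b ↔
      (∃ (i : Fin 3) (x y : V i), a = ⟨i, x⟩ ∧ b = ⟨i, y⟩ ∧ (G i).Adj x y) ∨
      (∃ i j : Fin 3, i ≠ j ∧ a = ⟨i, v i⟩ ∧ b = ⟨j, v j⟩) := by
  have hEne : ∀ i j : Fin 3, ((i : ℕ) + 1) % 3 = (j : ℕ) → i ≠ j := by decide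
  have hne : ∀ i j : Fin 3, i ≠ j →
      ((i : ℕ) + 1) % 3 = (j : ℕ) ∨ ((j : ℕ) + 1) % 3 = (i : ℕ) := by decide
  show (¬ a = b ∧ _) ↔ _
  constructor
  · rintro ⟨hab, h | h⟩
    · rcases h with (⟨i, x, y, rfl, rfl, hxy⟩ | ⟨i, j, hE, rfl, rfl⟩)
      · exact Or.inl ⟨i, x, y, rfl, rfl, hxy⟩
      · exact Or.inr ⟨i, j, hEne i j hE, rfl, rfl⟩
    · rcases h with (⟨i, x, y, rfl, rfl, hxy⟩ | ⟨i, j, hE, rfl, rfl⟩)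
      · exact Or.inl ⟨i, y, x, rfl, rfl, hxy.symm⟩
      · exact Or.inr ⟨j, i, (hEne i j hE).symm, rfl, rfl⟩
  · rintro (⟨i, x, y, rfl, rfl, hxy⟩ | ⟨i, j, hij, rfl, rfl⟩)
    · exact ⟨fun h => hxy.ne (sigma_mk_injective h), Or.inl (Or.inl ⟨i, x, y, rfl, rfl, hxy⟩)⟩
    · refine ⟨fun h => hij (congrArg Sigma.fst h), ?_⟩
      rcases hne i j hij with h' | h'
      · exact Or.inl (Or.inr ⟨i, j, h', rfl, rfl⟩)
      · exact Or.inr (Or.inr ⟨j, i, h', rfl, rfl⟩)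

/-- The inclusion of an induced part into the induced join. -/
def partHom (S : Set (Σ i, V i)) (i : Fin 3) :
    (G i).induce (Sigma.mk i ⁻¹' S) →g (H G v).induce S where
  toFun x := ⟨⟨i, x.1⟩, x.2⟩
  map_rel' := by
    intro a b hab
    simp only [comap_adj, Function.Embedding.coe_subtype] at hab ⊢
    exact (adj_iff G v).mpr (Or.inl ⟨i, a.1, b.1, rfl, rfl, hab⟩)

lemma key {S : Set (Σ i, V i)} {i : Fin 3} {a b : S}
    (w : ((H G v).induce S).Walk a b) :
    ∀ (y : V i) (hy : (⟨i, y⟩ : Σ i, V i) ∈ S), b = ⟨⟨i, y⟩, hy⟩ →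
    (∀ (x : V i) (hx : (⟨i, x⟩ : Σ i, V i) ∈ S), a = ⟨⟨i, x⟩, hx⟩ →
      ((G i).induce (Sigma.mk i ⁻¹' S)).Reachable ⟨x, hx⟩ ⟨y, hy⟩) ∧
    ((a : Σ i, V i).1 ≠ i → ∃ hv : (⟨i, v i⟩ : Σ i, V i) ∈ S,
      ((G i).induce (Sigma.mk i ⁻¹' S)).Reachable ⟨v i, hv⟩ ⟨y, hy⟩) := by
  induction w with
  | nil =>
      intro y hy hb
      constructor
      · intro x hx hax
        obtain rfl : x = y := sigma_mk_injective (congrArg Subtype.val (hax.symm.trans hb))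
        exact Reachable.refl _
      · intro hne
        rw [hb] at hne
        exact absurd rfl hne
  | @cons a c _ hadj p ih =>
      intro y hy hb
      have hadj' : (H G v).Adj (a : Σ i, V i) (c : Σ i, V i) := hadj
      rcases (adj_iff G v).mp hadj' with ⟨k, x1, x2, ha, hc, hxy⟩ | ⟨k, j, hkj, ha, hc⟩
      · constructor
        · intro x hx hax
          have hax' : (⟨i, x⟩ : Σ i, V i) = ⟨k, x1⟩ := by rw [← ha, hax]
          obtain rfl : i = k := congrArg Sigma.fst hax'
          obtain rfl : x = x1 := sigma_mk_injective hax'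
          have hx2 : (⟨i, x2⟩ : Σ i, V i) ∈ S := hc ▸ c.2
          have hr := (ih y hy hb).1 x2 hx2 (Subtype.ext hc)
          refine (Adj.reachable ?_).trans hr
          simp only [comap_adj, Function.Embedding.coe_subtype]
          exact hxy
        · intro hne
          refine (ih y hy hb).2 ?_
          have : (c : Σ i, V i).1 = k := congrArg Sigma.fst hc
          have ha1 : (a : Σ i, V i).1 = k := congrArg Sigma.fst ha
          rw [this]; rw [ha1] at hne; exact hne
      · constructor
        · intro x hx hax
          have hax' : (⟨i, x⟩ : Σ i, V i) = ⟨k, v k⟩ := by rw [← ha, hax]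
          obtain rfl : i = k := congrArg Sigma.fst hax'
          obtain rfl : x = v i := sigma_mk_injective hax'
          have hcne : (c : Σ i, V i).1 ≠ i := by
            rw [hc]; exact fun h => hkj h.symm
          obtain ⟨hv, hr⟩ := (ih y hy hb).2 hcne
          exact hr
        · intro hne
          have hk : k ≠ i := by
            have ha1 : (a : Σ i, V i).1 = k := congrArg Sigma.fst ha
            rw [ha1] at hne; exact hne
          by_cases hji : j = i
          · subst hji
            have hv : (⟨j, v j⟩ : Σ i, V i) ∈ S := hc ▸ c.2
            exact ⟨hv, (ih y hy hb).1 (v j) hv (Subtype.ext hc)⟩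
          · exact (ih y hy hb).2 (by rw [hc]; exact hji)


lemma conn_iff (S : Set (Σ i, V i)) :
    ((H G v).induce S).Connected ↔
      S.Nonempty ∧
      (∀ i, (Sigma.mk i ⁻¹' S).Nonempty → ((G i).induce (Sigma.mk i ⁻¹' S)).Connected) ∧
      ((∃ i j : Fin 3, i ≠ j ∧ (Sigma.mk i ⁻¹' S).Nonempty ∧ (Sigma.mk j ⁻¹' S).Nonempty) →
        ∀ i, (Sigma.mk i ⁻¹' S).Nonempty → v i ∈ Sigma.mk i ⁻¹' S) := by
  constructor
  · intro hconn
    refine ⟨?_, ?_, ?_⟩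
    · obtain ⟨⟨z, hz⟩⟩ := hconn.nonempty
      exact ⟨z, hz⟩
    · intro i ⟨x, hx⟩
      rw [connected_iff]
      refine ⟨?_, ⟨⟨x, hx⟩⟩⟩
      intro ⟨x1, h1⟩ ⟨x2, h2⟩
      obtain ⟨w⟩ := hconn.preconnected ⟨⟨i, x1⟩, h1⟩ ⟨⟨i, x2⟩, h2⟩
      exact (key G v w x2 h2 rfl).1 x1 h1 rfl
    · rintro ⟨i, j, hij, ⟨xi, hxi⟩, ⟨xj, hxj⟩⟩ k ⟨xk, hxk⟩
      obtain ⟨l, hlk, z, hz⟩ : ∃ l, l ≠ k ∧ ∃ z : V l, (⟨l, z⟩ : Σ i, V i) ∈ S := by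
        by_cases hik : i = k
        · exact ⟨j, fun h => hij (hik.trans h.symm), xj, hxj⟩
        · exact ⟨i, hik, xi, hxi⟩
      obtain ⟨w⟩ := hconn.preconnected ⟨⟨l, z⟩, hz⟩ ⟨⟨k, xk⟩, hxk⟩
      obtain ⟨hv, -⟩ := (key G v w xk hxk rfl).2 hlk
      exact hv
  · rintro ⟨⟨z0, hz0⟩, hparts, hvs⟩
    rw [connected_iff]
    refine ⟨?_, ⟨⟨z0, hz0⟩⟩⟩
    rintro ⟨⟨ia, xa⟩, ha⟩ ⟨⟨ib, xb⟩, hb⟩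
    by_cases hij : ia = ib
    · subst hij
      have hr := (hparts ia ⟨xa, ha⟩).preconnected ⟨xa, ha⟩ ⟨xb, hb⟩
      exact hr.map (partHom G v S ia)
    · have hmulti : ∃ i j : Fin 3, i ≠ j ∧ (Sigma.mk i ⁻¹' S).Nonempty ∧
          (Sigma.mk j ⁻¹' S).Nonempty := ⟨ia, ib, hij, ⟨xa, ha⟩, ⟨xb, hb⟩⟩
      have hva := hvs hmulti ia ⟨xa, ha⟩
      have hvb := hvs hmulti ib ⟨xb, hb⟩
      have r1 : ((H G v).induce S).Reachable ⟨⟨ia, xa⟩, ha⟩ ⟨⟨ia, v ia⟩, hva⟩ :=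
        ((hparts ia ⟨xa, ha⟩).preconnected ⟨xa, ha⟩ ⟨v ia, hva⟩).map (partHom G v S ia)
      have r3 : ((H G v).induce S).Reachable ⟨⟨ib, v ib⟩, hvb⟩ ⟨⟨ib, xb⟩, hb⟩ :=
        ((hparts ib ⟨xb, hb⟩).preconnected ⟨v ib, hvb⟩ ⟨xb, hb⟩).map (partHom G v S ib)
      have r2 : ((H G v).induce S).Adj ⟨⟨ia, v ia⟩, hva⟩ ⟨⟨ib, v ib⟩, hvb⟩ := by
        simp only [comap_adj, Function.Embedding.coe_subtype]
        exact (adj_iff G v).mpr (Or.inr ⟨ia, ib, hij, rfl, rfl⟩)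
      exact r1.trans (r2.reachable.trans r3)


noncomputable section
open Classical

/-- The decomposition of a finset of the sigma type into its parts. -/
def sigmaFinsetEquiv : Finset (Σ i, V i) ≃ ∀ i, Finset (V i) where
  toFun S i := S.preimage (Sigma.mk i) sigma_mk_injective.injOn
  invFun f := (Finset.univ : Finset (Fin 3)).sigma f
  left_inv S := by
    ext ⟨i, x⟩
    simp [Finset.mem_sigma, Finset.mem_preimage]
  right_inv f := by
    funext i
    ext x
    simp [Finset.mem_sigma, Finset.mem_preimage]

def Pred (f : ∀ i, Finset (V i)) : Prop :=
  (∃ i, (f i).Nonempty) ∧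
  (∀ i, (f i).Nonempty → ((G i).induce (↑(f i) : Set (V i))).Connected) ∧
  ((∃ i j : Fin 3, i ≠ j ∧ (f i).Nonempty ∧ (f j).Nonempty) →
    ∀ i, (f i).Nonempty → v i ∈ f i)

def Qd (f : ∀ i, Finset (V i)) : Prop := ∀ i, (f i).Nonempty → v i ∈ f i

def Dp (f : ∀ i, Finset (V i)) : Prop :=
  (∀ i, (f i).Nonempty → v i ∈ f i ∧ ((G i).induce (↑(f i) : Set (V i))).Connected) ∧
  (∃ i, (f i).Nonempty)

def Sp (f : ∀ i, Finset (V i)) : Prop :=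
  ∃ i : Fin 3, (v i ∉ f i ∧ (f i).Nonempty ∧ ((G i).induce (↑(f i) : Set (V i))).Connected) ∧
    ∀ j, j ≠ i → f j = ∅

lemma predQ {f : ∀ i, Finset (V i)} : Pred G v f ∧ Qd v f ↔ Dp G v f := by
  constructor
  · rintro ⟨⟨hex, hconn, -⟩, hQ⟩
    exact ⟨fun i hi => ⟨hQ i hi, hconn i hi⟩, hex⟩
  · rintro ⟨hall, hex⟩
    exact ⟨⟨hex, fun i hi => (hall i hi).2, fun _ i hi => (hall i hi).1⟩,
      fun i hi => (hall i hi).1⟩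

lemma prednotQ {f : ∀ i, Finset (V i)} : Pred G v f ∧ ¬ Qd v f ↔ Sp G v f := by
  constructor
  · rintro ⟨⟨hex, hconn, hmul⟩, hQ⟩
    rw [Qd] at hQ
    push_neg at hQ
    obtain ⟨i, hi, hvi⟩ := hQ
    refine ⟨i, ⟨hvi, hi, hconn i hi⟩, fun j hj => ?_⟩
    by_contra hj'
    have hjne : (f j).Nonempty := Finset.nonempty_iff_ne_empty.mpr hj'
    exact hvi (hmul ⟨j, i, hj, hjne, hi⟩ i hi)
  · rintro ⟨i, ⟨hvi, hi, hconn⟩, ho⟩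
    refine ⟨⟨⟨i, hi⟩, ?_, ?_⟩, fun hQ => hvi (hQ i hi)⟩
    · intro j hj
      obtain rfl : j = i := by
        by_contra hji
        rw [ho j hji] at hj
        exact absurd hj Finset.not_nonempty_empty
      exact hconn
    · rintro ⟨k, l, hkl, hk, hl⟩
      exfalso
      rcases ne_or_eq k i with h | rfl
      · rw [ho k h] at hk; exact absurd hk Finset.not_nonempty_empty
      · rw [ho l (fun h => hkl h.symm)] at hl; exact absurd hl Finset.not_nonempty_empty

/-- Characterization of nonempty connected finsets of the join in terms of parts. -/
lemma char (S : Finset (Σ i, V i)) :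
    (S.Nonempty ∧ ((H G v).induce (↑S : Set (Σ i, V i))).Connected) ↔
      Pred G v (sigmaFinsetEquiv S) := by
  have h1 : ∀ i, (↑(sigmaFinsetEquiv S i) : Set (V i)) = Sigma.mk i ⁻¹' (↑S : Set (Σ i, V i)) :=
    fun i => Finset.coe_preimage _ sigma_mk_injective.injOn
  have h2 : ∀ i, (sigmaFinsetEquiv S i).Nonempty ↔
      (Sigma.mk i ⁻¹' (↑S : Set (Σ i, V i))).Nonempty := fun i => by
    rw [← Finset.coe_nonempty, h1]
  have h3 : ∀ i, v i ∈ sigmaFinsetEquiv S i ↔ v i ∈ Sigma.mk i ⁻¹' (↑S : Set (Σ i, V i)) :=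
    fun i => by
      simp [sigmaFinsetEquiv, Finset.mem_preimage]
  have h4 : S.Nonempty ↔ ∃ i, (sigmaFinsetEquiv S i).Nonempty := by
    constructor
    · rintro ⟨⟨i, x⟩, hx⟩
      exact ⟨i, (h2 i).mpr ⟨x, hx⟩⟩
    · rintro ⟨i, hi⟩
      obtain ⟨x, hx⟩ := (h2 i).mp hi
      exact ⟨⟨i, x⟩, hx⟩
  rw [conn_iff, Pred]
  simp only [h2, h3, h4]
  constructor
  · rintro ⟨hne, -, hconn, hv⟩
    refine ⟨hne, fun i hi => ?_, hv⟩
    rw [h1]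
    exact hconn i hi
  · rintro ⟨hne, hconn, hv⟩
    refine ⟨hne, ?_, fun i hi => ?_, hv⟩
    · obtain ⟨i, hi⟩ := hne
      obtain ⟨x, hx⟩ := hi
      exact ⟨⟨i, x⟩, hx⟩
    · have := hconn i hi
      rwa [h1] at this

lemma induce_induce_conn {W : Type*} (Gr : SimpleGraph W) (t : Set W) (s : Set ↥t) :
    ((Gr.induce t).induce s).Connected ↔ (Gr.induce (Subtype.val '' s)).Connected := by
  let e : ((Gr.induce t).induce s) ≃g (Gr.induce (Subtype.val '' s)) :=
    { toEquiv := Equiv.Set.image Subtype.val s Subtype.val_injective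
      map_rel_iff' := by
        intro a b
        simp [Equiv.Set.image, Equiv.Set.imageOfInjOn, comap_adj] }
  exact e.connected_iff

lemma conn_map_iff {W : Type*} (Gr : SimpleGraph W) (t : Set W) (s : Finset ↥t) :
    ((Gr.induce t).induce (↑s : Set ↥t)).Connected ↔
      (Gr.induce (↑(s.map (Function.Embedding.subtype (· ∈ t))) : Set W)).Connected := by
  rw [induce_induce_conn, Finset.coe_map, Function.Embedding.coe_subtype]

lemma numCIS_induce (W : Type*) (Gr : SimpleGraph W) (t : Set W) :
    numCIS (Gr.induce t) =
      Nat.card {s : Finset W //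
        (∀ x ∈ s, x ∈ t) ∧ s.Nonempty ∧ (Gr.induce (↑s : Set W)).Connected} := by
  apply Nat.card_congr
  refine ⟨fun s => ⟨s.1.map (Function.Embedding.subtype (· ∈ t)), ?_, ?_, ?_⟩,
    fun s => ⟨(s.1.subtype (· ∈ t)), ?_, ?_⟩, ?_, ?_⟩
  · intro x hx
    obtain ⟨y, -, rfl⟩ := Finset.mem_map.mp hx
    exact y.2
  · exact Finset.Nonempty.map s.2.1
  · exact (conn_map_iff Gr t s.1).mp s.2.2
  · obtain ⟨x, hx⟩ := s.2.2.1
    exact ⟨⟨x, s.2.1 x hx⟩, Finset.mem_subtype.mpr hx⟩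
  · rw [conn_map_iff Gr t, Finset.subtype_map_of_mem s.2.1]
    exact s.2.2.2
  · intro s
    apply Subtype.ext
    dsimp only
    ext ⟨x, hx⟩
    simp only [Finset.mem_subtype, Finset.mem_map, Function.Embedding.coe_subtype]
    constructor
    · rintro ⟨⟨y, hy⟩, hmem, rfl⟩
      exact hmem
    · intro hmem
      exact ⟨⟨x, hx⟩, hmem, rfl⟩
  · intro s
    apply Subtype.ext
    dsimp only
    exact Finset.subtype_map_of_mem s.2.1

def option_equiv {W : Type*} (P : Finset W → Prop) (hP : ∀ s, P s → s.Nonempty) :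
    {s : Finset W // s.Nonempty → P s} ≃ Option {s : Finset W // P s} where
  toFun s := if h : s.1.Nonempty then some ⟨s.1, s.2 h⟩ else none
  invFun o := o.elim ⟨∅, fun h => absurd h Finset.not_nonempty_empty⟩
    (fun s => ⟨s.1, fun _ => s.2⟩)
  left_inv s := by
    dsimp only
    by_cases h : s.1.Nonempty
    · rw [dif_pos h]
      rfl
    · rw [dif_neg h]
      exact Subtype.ext (Finset.not_nonempty_iff_eq_empty.mp h).symm
  right_inv o := by
    cases o with
    | none => simp
    | some s => simp [hP s.1 s.2]

universe uco in
lemma card_option {α : Type uco} [Finite α] : Nat.card (Option α) = Nat.card α + 1 := by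
  rw [Nat.card_congr (Equiv.optionEquivSumPUnit.{uco, uco} α), Nat.card_sum]
  simp

/-- The single-part case. -/
lemma card_sp :
    Nat.card {f : ∀ i, Finset (V i) // Sp G v f} =
      ∑ i : Fin 3, Nat.card {s : Finset (V i) //
        v i ∉ s ∧ s.Nonempty ∧ ((G i).induce (↑s : Set (V i))).Connected} := by
  classical
  have e : (Σ i : Fin 3, {s : Finset (V i) //
      v i ∉ s ∧ s.Nonempty ∧ ((G i).induce (↑s : Set (V i))).Connected}) ≃
      {f : ∀ i, Finset (V i) // Sp G v f} := by
    refine Equiv.ofBijective (fun y =>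
      ⟨Function.update (fun j => (∅ : Finset (V j))) y.1 y.2.1, y.1, ?_, ?_⟩) ⟨?_, ?_⟩
    · rw [Function.update_self]
      exact y.2.2
    · intro j hj
      exact Function.update_of_ne hj _ _
    · rintro ⟨i, s⟩ ⟨j, t⟩ h
      have hf := congrArg Subtype.val h
      dsimp only at hf
      by_cases hij : i = j
      · subst hij
        have : s.1 = t.1 := by
          have := congrFun hf i
          rwa [Function.update_self, Function.update_self] at this
        exact congrArg (Sigma.mk i) (Subtype.ext this)
      · exfalso
        have h1 := congrFun hf i
        rw [Function.update_self, Function.update_of_ne hij] at h1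
        obtain ⟨x, hx⟩ := s.2.2.1
        rw [h1] at hx
        exact absurd hx (Finset.notMem_empty x)
    · rintro ⟨f, i, hi, ho⟩
      refine ⟨⟨i, ⟨f i, hi⟩⟩, Subtype.ext ?_⟩
      dsimp only
      funext j
      by_cases hj : j = i
      · subst hj
        exact Function.update_self _ _ _
      · rw [Function.update_of_ne hj]
        exact (ho j hj).symm
  rw [← Nat.card_congr e]
  letI : ∀ i : Fin 3, Fintype {s : Finset (V i) //
      v i ∉ s ∧ s.Nonempty ∧ ((G i).induce (↑s : Set (V i))).Connected} :=
    fun i => Fintype.ofFinite _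
  rw [Nat.card_eq_fintype_card, Fintype.card_sigma]
  exact Finset.sum_congr rfl fun i _ => Nat.card_eq_fintype_card.symm

/-- Cardinality of connected induced subgraphs avoiding `v i`. -/
lemma card_c (i : Fin 3) :
    Nat.card {s : Finset (V i) //
        v i ∉ s ∧ s.Nonempty ∧ ((G i).induce (↑s : Set (V i))).Connected} =
      numCIS ((G i).induce ({v i}ᶜ : Set (V i))) := by
  rw [numCIS_induce]
  apply Nat.card_congr
  apply Equiv.subtypeEquivRight
  intro s
  apply and_congr_left'
  constructor
  · intro h x hx
    simp only [Set.mem_compl_iff, Set.mem_singleton_iff]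
    rintro rfl
    exact h hx
  · intro h hv
    simpa using h (v i) hv

/-- The multi-part (and `v`-containing single part) case. -/
lemma card_dp :
    Nat.card {f : ∀ i, Finset (V i) // Dp G v f} + 1 =
      (1 + numCISat (G 0) (v 0)) * (1 + numCISat (G 1) (v 1)) *
        (1 + numCISat (G 2) (v 2)) := by
  classical
  have e1 : {f : ∀ i, Finset (V i) // Dp G v f} ≃
      {x : {f : ∀ i, Finset (V i) //
          ∀ i, (f i).Nonempty → v i ∈ f i ∧ ((G i).induce (↑(f i) : Set (V i))).Connected} //
        ∃ i, (x.1 i).Nonempty} :=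
    (Equiv.subtypeSubtypeEquivSubtypeInter
      (fun f : ∀ i, Finset (V i) =>
        ∀ i, (f i).Nonempty → v i ∈ f i ∧ ((G i).induce (↑(f i) : Set (V i))).Connected)
      (fun f => ∃ i, (f i).Nonempty)).symm
  set E := {f : ∀ i, Finset (V i) //
      ∀ i, (f i).Nonempty → v i ∈ f i ∧ ((G i).induce (↑(f i) : Set (V i))).Connected} with hE
  have h2 : Nat.card E = Nat.card {x : E // ∃ i, (x.1 i).Nonempty} +
      Nat.card {x : E // ¬ ∃ i, (x.1 i).Nonempty} := by
    rw [← Nat.card_sum]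
    exact (Nat.card_congr (Equiv.sumCompl _)).symm
  have h3 : Nat.card {x : E // ¬ ∃ i, (x.1 i).Nonempty} = 1 := by
    have hn : Nonempty {x : E // ¬ ∃ i, (x.1 i).Nonempty} :=
      ⟨⟨⟨fun _ => ∅, fun i h => absurd h Finset.not_nonempty_empty⟩,
        fun ⟨i, h⟩ => absurd h Finset.not_nonempty_empty⟩⟩
    have hs : Subsingleton {x : E // ¬ ∃ i, (x.1 i).Nonempty} := by
      constructor
      intro x y
      apply Subtype.ext
      apply Subtype.ext
      funext i
      have hx := Finset.not_nonempty_iff_eq_empty.mp (not_exists.mp x.2 i)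
      have hy := Finset.not_nonempty_iff_eq_empty.mp (not_exists.mp y.2 i)
      rw [hx, hy]
    exact Nat.card_unique
  have h4 : Nat.card E = ∏ i : Fin 3, (1 + numCISat (G i) (v i)) := by
    rw [Nat.card_congr (Equiv.subtypePiEquivPi
      (p := fun i (s : Finset (V i)) =>
        s.Nonempty → v i ∈ s ∧ ((G i).induce (↑s : Set (V i))).Connected)), Nat.card_pi]
    refine Finset.prod_congr rfl fun i _ => ?_
    rw [Nat.card_congr (option_equiv _ (fun s h => ⟨v i, h.1⟩)), card_option, Nat.add_comm]
    rfl
  have h5 : Nat.card {f : ∀ i, Finset (V i) // Dp G v f} =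
      Nat.card {x : E // ∃ i, (x.1 i).Nonempty} := Nat.card_congr e1
  rw [h5]
  rw [h4, Fin.prod_univ_three] at h2
  omega
end

end TJP


/-- Formula for the number of connected induced subgraphs of the graph obtained from three
disjoint connected graphs `G 0, G 1, G 2` by adding the triangle edges among the
distinguished vertices `v 0, v 1, v 2`. -/
theorem numCIS_triangleJoin {V : Fin 3 → Type*} [∀ i, Fintype (V i)]
    (G : ∀ i, SimpleGraph (V i)) (v : ∀ i, V i) (hc : ∀ i, (G i).Connected) :
    numCIS (graphsJoin G v (fun i j => ((i : ℕ) + 1) % 3 = (j : ℕ))) =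
      numCIS ((G 0).induce ({v 0}ᶜ : Set (V 0))) +
      numCIS ((G 1).induce ({v 1}ᶜ : Set (V 1))) +
      numCIS ((G 2).induce ({v 2}ᶜ : Set (V 2))) +
      (1 + numCISat (G 0) (v 0)) * (1 + numCISat (G 1) (v 1)) *
        (1 + numCISat (G 2) (v 2)) - 1 := by
  classical
  open TJP in
  have step1 : numCIS (TJP.H G v) = Nat.card {f : ∀ i, Finset (V i) // TJP.Pred G v f} :=
    Nat.card_congr (Equiv.subtypeEquiv TJP.sigmaFinsetEquiv (fun S => TJP.char G v S))
  have hsplit : Nat.card {f : ∀ i, Finset (V i) // TJP.Pred G v f} =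
      Nat.card {f : ∀ i, Finset (V i) // TJP.Dp G v f} +
      Nat.card {f : ∀ i, Finset (V i) // TJP.Sp G v f} := by
    have h1 : Nat.card {f : ∀ i, Finset (V i) // TJP.Pred G v f} =
        Nat.card ({x : {f : ∀ i, Finset (V i) // TJP.Pred G v f} // TJP.Qd v x.1} ⊕
          {x : {f : ∀ i, Finset (V i) // TJP.Pred G v f} // ¬ TJP.Qd v x.1}) :=
      (Nat.card_congr (Equiv.sumCompl fun x : {f : ∀ i, Finset (V i) // TJP.Pred G v f} =>
        TJP.Qd v x.1)).symm
    rw [h1, Nat.card_sum]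
    congr 1
    · exact Nat.card_congr ((Equiv.subtypeSubtypeEquivSubtypeInter _ _).trans
        (Equiv.subtypeEquivRight fun f => TJP.predQ G v))
    · exact Nat.card_congr ((Equiv.subtypeSubtypeEquivSubtypeInter _ _).trans
        (Equiv.subtypeEquivRight fun f => TJP.prednotQ G v))
  have hsp := TJP.card_sp (G := G) (v := v)
  rw [Fin.sum_univ_three, TJP.card_c G v 0, TJP.card_c G v 1, TJP.card_c G v 2] at hsp
  have hdp := TJP.card_dp (G := G) (v := v)
  show numCIS (TJP.H G v) = _
  rw [step1, hsplit, hsp]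
  omega
end

section
/- For n = 4m+2 with m a positive integer, let Δ_{n,n-4} be the triangle-based graph with n vertices and n−4 cut vertices in which the pendant path orders attached to the triangle are as equal as possible (orders determined by q = ⌊(n−3)/4⌋ and the residue of n−3 mod 4, with the longer paths at v2 first, then v1, then v0), and Ω_{n,n-4} the square v0v1v2v3 with pendant paths of orders m+1, m+1, m, m at v0, v1, v2, v3. Then N(Ω_{n,n-4}) − N(Δ_{n,n-4}) = m(m² + m − 1) > 0. -/
/-!
A connected induced subgraph of a cycle with pendant paths either avoids the cycle, and is then a
segment of a single pendant path, or meets the cycle in a connected set `S` and consists of `S`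
together with an initial segment of every path attached in `S`. Hence
`N = ∑ᵢ ∑_{b < len i} (b + 1) + ∑_{S connected} ∏ᵢ (len i + 1 if att i ∈ S, else 1)`.
In `C₃` every nonempty `S` is connected, in `C₄` all but `{v₀, v₂}` and `{v₁, v₃}`; evaluating both
formulas at `m = w + 1` gives the difference `m (m² + m - 1)`.
-/

open SimpleGraph

/-- The cycle `C_g` together with `k` pendant paths: the `i`-th pendant path has
`len i` new vertices and is attached at the cycle vertex `att i`. -/
def cyclePendants (g k : ℕ) (att : Fin k → Fin g) (len : Fin k → ℕ) :
    SimpleGraph (Fin g ⊕ Σ i : Fin k, Fin (len i)) :=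
  SimpleGraph.fromRel (fun a b =>
    (∃ x y : Fin g, a = Sum.inl x ∧ b = Sum.inl y ∧ ((x : ℕ) + 1) % g = (y : ℕ)) ∨
    (∃ (i : Fin k) (p q : Fin (len i)), a = Sum.inr ⟨i, p⟩ ∧ b = Sum.inr ⟨i, q⟩ ∧
      (p : ℕ) + 1 = (q : ℕ)) ∨
    (∃ (i : Fin k) (h : 0 < len i), a = Sum.inl (att i) ∧ b = Sum.inr ⟨i, ⟨0, h⟩⟩))

namespace SimpleGraph

variable {V : Type*} {G : SimpleGraph V}

theorem exists_adj_of_induce_connected {s A : Set V} (h : (G.induce s).Connected) {a b : V}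
    (ha : a ∈ s) (haA : a ∈ A) (hb : b ∈ s) (hbA : b ∉ A) :
    ∃ x ∈ s, x ∈ A ∧ ∃ y ∈ s, y ∉ A ∧ G.Adj x y := by
  obtain ⟨p⟩ := h.preconnected ⟨a, ha⟩ ⟨b, hb⟩
  obtain ⟨d, -, hx, hy⟩ := p.exists_boundary_dart {x | (x : V) ∈ A} haA hbA
  exact ⟨d.fst, d.fst.2, hx, d.snd, d.snd.2, hy, d.adj⟩

theorem not_induce_pair_connected {u v : V} (hne : u ≠ v) (hadj : ¬ G.Adj u v) :
    ¬ (G.induce {u, v}).Connected := fun h => by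
  obtain ⟨x, hx, rfl, y, hy, hyu, hxy⟩ := exists_adj_of_induce_connected h (A := {u})
    (Set.mem_insert u _) rfl (Set.mem_insert_of_mem u rfl) hne.symm
  obtain rfl | rfl := hy
  exacts [hyu rfl, hadj hxy]

theorem induce_connected_of_adj_or_common_neighbor {s : Set V} (hs : s.Nonempty)
    (h : ∀ x ∈ s, ∀ y ∈ s, x = y ∨ G.Adj x y ∨ ∃ z ∈ s, G.Adj x z ∧ G.Adj z y) :
    (G.induce s).Connected := by
  obtain ⟨x, hx⟩ := hs
  rw [connected_iff_exists_forall_reachable]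
  refine ⟨⟨x, hx⟩, fun ⟨y, hy⟩ => ?_⟩
  obtain rfl | hxy | ⟨z, hz, hxz, hzy⟩ := h x hx y hy
  · rfl
  · exact Adj.reachable (G := G.induce s) hxy
  · exact (Adj.reachable (G := G.induce s) (u := ⟨x, hx⟩) (v := ⟨z, hz⟩) hxz).trans
      (Adj.reachable hzy)

theorem induce_connected_of_retraction {s t : Set V} (f : V → V) (hs : (G.induce s).Connected)
    (hts : t ⊆ s) (ht : t.Nonempty) (hmaps : Set.MapsTo f s t) (hfix : ∀ v ∈ t, f v = v)
    (hadj : ∀ u ∈ s, ∀ v ∈ s, G.Adj u v → f u = f v ∨ G.Adj (f u) (f v)) :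
    (G.induce t).Connected := by
  let φ : s → t := fun v => ⟨f v, hmaps v.2⟩
  have hφ : ∀ u v : s, (G.induce s).Adj u v → (G.induce t).Reachable (φ u) (φ v) := by
    intro u v huv
    obtain h | h := hadj u u.2 v v.2 huv
    · rw [show φ u = φ v from Subtype.ext h]
    · exact Adj.reachable h
  have hreach : ∀ u v : s, (G.induce s).Reachable u v → (G.induce t).Reachable (φ u) (φ v) :=
    fun u v huv => (reachable_iff_reflTransGen _ _).2 <|
      Relation.ReflTransGen.lift' φ (fun a b hab => (reachable_iff_reflTransGen _ _).1 (hφ a b hab))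
        u v ((reachable_iff_reflTransGen _ _).1 huv)
  have : Nonempty t := ht.to_subtype
  refine ⟨fun ⟨u, hu⟩ ⟨v, hv⟩ => ?_⟩
  have huv := hreach ⟨u, hts hu⟩ ⟨v, hts hv⟩ (hs.preconnected _ _)
  simpa only [φ, hfix u hu, hfix v hv] using huv

end SimpleGraph

open Finset Sum

namespace cyclePendants

section

variable {g k : ℕ} {att : Fin k → Fin g} {len : Fin k → ℕ}

local notation "𝒱" => Fin g ⊕ Σ i : Fin k, Fin (len i)

local notation "𝒢" => cyclePendants g k att len

theorem adj_inl_inl {x y : Fin g} :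
    (𝒢).Adj (inl x) (inl y) ↔ x ≠ y ∧ (((x : ℕ) + 1) % g = y ∨ ((y : ℕ) + 1) % g = x) := by
  simp [cyclePendants]

theorem adj_inl_inr {x : Fin g} {i : Fin k} {p : Fin (len i)} :
    (𝒢).Adj (inl x) (inr ⟨i, p⟩) ↔ x = att i ∧ (p : ℕ) = 0 := by
  simp only [cyclePendants, fromRel_adj]
  constructor
  · rintro ⟨-, (⟨-, -, -, ⟨⟩, -⟩ | ⟨-, -, -, ⟨⟩, -⟩ | ⟨-, -, ⟨⟩, ⟨⟩⟩) |
      (⟨-, -, ⟨⟩, -⟩ | ⟨-, -, -, -, ⟨⟩, -⟩ | ⟨-, -, ⟨⟩, -⟩)⟩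
    exact ⟨rfl, rfl⟩
  · rintro ⟨rfl, hp⟩
    exact ⟨by simp, .inl (.inr (.inr ⟨i, p.pos, rfl, by rw [Fin.ext (b := ⟨0, p.pos⟩) hp]⟩))⟩

theorem adj_inr_inr {i j : Fin k} {p : Fin (len i)} {q : Fin (len j)} :
    (𝒢).Adj (inr ⟨i, p⟩) (inr ⟨j, q⟩) ↔ i = j ∧ ((p : ℕ) + 1 = q ∨ (q : ℕ) + 1 = p) := by
  simp only [cyclePendants, fromRel_adj]
  constructor
  · rintro ⟨-, (⟨-, -, ⟨⟩, -⟩ | ⟨_, _, _, h₁, h₂, h⟩ | ⟨-, -, ⟨⟩, -⟩) |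
      (⟨-, -, ⟨⟩, -⟩ | ⟨_, _, _, h₁, h₂, h⟩ | ⟨-, -, ⟨⟩, -⟩)⟩ <;> cases h₁ <;> cases h₂
    exacts [⟨rfl, .inl h⟩, ⟨rfl, .inr h⟩]
  · rintro ⟨rfl, h | h⟩
    · exact ⟨by simp [Fin.ext_iff]; omega, .inl (.inr (.inl ⟨i, p, q, rfl, rfl, h⟩))⟩
    · exact ⟨by simp [Fin.ext_iff]; omega, .inr (.inr (.inl ⟨i, q, p, rfl, rfl, h⟩))⟩

/-- The vertices at levels `a, …, b` of the `i`-th pendant path; level `0` is the vertex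
adjacent to the cycle. -/
def pathSegment (i : Fin k) (a b : ℕ) : Finset 𝒱 :=
  (∅ : Finset (Fin g)).disjSum (univ.filter fun v => v.1 = i ∧ a ≤ (v.2 : ℕ) ∧ (v.2 : ℕ) ≤ b)

def cycleWithPrefixes (S : Finset (Fin g)) (c : Fin k → ℕ) : Finset 𝒱 :=
  S.disjSum (univ.filter fun v => (v.2 : ℕ) < c v.1)

@[simp]
theorem inl_notMem_pathSegment {x : Fin g} {i : Fin k} {a b : ℕ} :
    inl x ∉ pathSegment (len := len) i a b := by
  simp [pathSegment]

@[simp]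
theorem inr_mem_pathSegment {i j : Fin k} {p : Fin (len j)} {a b : ℕ} :
    inr ⟨j, p⟩ ∈ pathSegment (g := g) i a b ↔ j = i ∧ a ≤ p ∧ (p : ℕ) ≤ b := by
  simp [pathSegment]

@[simp]
theorem inl_mem_cycleWithPrefixes {x : Fin g} {S : Finset (Fin g)} {c : Fin k → ℕ} :
    inl x ∈ cycleWithPrefixes (len := len) S c ↔ x ∈ S := by
  simp [cycleWithPrefixes]

@[simp]
theorem inr_mem_cycleWithPrefixes {j : Fin k} {p : Fin (len j)} {S : Finset (Fin g)}
    {c : Fin k → ℕ} : inr ⟨j, p⟩ ∈ cycleWithPrefixes S c ↔ (p : ℕ) < c j := by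
  simp [cycleWithPrefixes]

theorem pathSegment_connected {i : Fin k} {a b : ℕ} (hab : a ≤ b) (hb : b < len i) :
    ((𝒢).induce (↑(pathSegment i a b : Finset 𝒱) : Set 𝒱)).Connected := by
  have ha : (inr ⟨i, ⟨a, by omega⟩⟩ : 𝒱) ∈ pathSegment i a b := by simp [hab]
  rw [connected_iff_exists_forall_reachable]
  refine ⟨⟨_, ha⟩, ?_⟩
  suffices h : ∀ q (haq : a ≤ q) (hqb : q ≤ b),
      ((𝒢).induce _).Reachable ⟨_, ha⟩ ⟨inr ⟨i, ⟨q, by omega⟩⟩, by simp; omega⟩ by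
    rintro ⟨x | ⟨j, p⟩, hv⟩
    · simp at hv
    · obtain ⟨rfl, hap, hpb⟩ := inr_mem_pathSegment.1 hv
      exact h p hap hpb
  intro q haq
  induction q, haq using Nat.le_induction with
  | base => exact fun _ => .rfl
  | succ q haq ih =>
    refine fun hq => (ih (by omega)).trans (Adj.reachable ?_)
    exact adj_inr_inr.2 ⟨rfl, .inl rfl⟩

theorem cycleWithPrefixes_connected {S : Finset (Fin g)} {c : Fin k → ℕ}
    (hS : ((𝒢).induce (inl '' (S : Set (Fin g)))).Connected)
    (hc : ∀ i, c i ≤ len i ∧ (0 < c i → att i ∈ S)) :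
    ((𝒢).induce (↑(cycleWithPrefixes S c : Finset 𝒱) : Set 𝒱)).Connected := by
  obtain ⟨⟨_, x₀, hx₀, rfl⟩⟩ := hS.nonempty
  have hcyc : inl '' (S : Set (Fin g)) ⊆ (↑(cycleWithPrefixes S c : Finset 𝒱) : Set 𝒱) := by
    rintro _ ⟨x, hx, rfl⟩
    simpa using hx
  refine induce_connected_of_patches _ (hcyc ⟨x₀, hx₀, rfl⟩) fun {v} hv => ?_
  obtain x | ⟨i, p⟩ := v
  · exact ⟨_, hcyc, ⟨x₀, hx₀, rfl⟩, ⟨x, by simpa using hv, rfl⟩, hS.preconnected _ _⟩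
  · have hp : (p : ℕ) < c i := inr_mem_cycleWithPrefixes.1 hv
    have hatt : att i ∈ S := (hc i).2 (by omega)
    have hseg :
        ((𝒢).induce (inl '' (S : Set (Fin g)) ∪ ↑(pathSegment i 0 p : Finset 𝒱))).Connected :=
      connected_induce_union hS.preconnected
        (pathSegment_connected (att := att) (Nat.zero_le _) p.2).preconnected
        (v := inl (att i)) (w := inr ⟨i, ⟨0, p.pos⟩⟩) ⟨_, hatt, rfl⟩ (by simp)
        (adj_inl_inr.2 ⟨rfl, rfl⟩)
    refine ⟨_, Set.union_subset hcyc ?_, .inl ⟨x₀, hx₀, rfl⟩, .inr (by simp), hseg.preconnected _ _⟩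
    rintro (x | ⟨j, q⟩) hq
    · simp at hq
    · obtain ⟨rfl, -, hqp⟩ := inr_mem_pathSegment.1 hq
      simpa using hqp.trans_lt hp

/-- In a connected `s`, the part of the `i`-th pendant path at levels `≥ t` is joined to the rest
of `s` only through the vertex just below level `t`. -/
theorem mem_below_of_induce_connected {s : Finset 𝒱} (hs : ((𝒢).induce (s : Set 𝒱)).Connected)
    {i : Fin k} {t : ℕ} {u : Fin (len i)} (hu : inr ⟨i, u⟩ ∈ s) (htu : t ≤ u) {w : 𝒱}
    (hw : w ∈ s) (hwt : ∀ p : Fin (len i), w = inr ⟨i, p⟩ → (p : ℕ) < t) :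
    (∃ p : Fin (len i), (p : ℕ) + 1 = t ∧ inr ⟨i, p⟩ ∈ s) ∨ (t = 0 ∧ inl (att i) ∈ s) := by
  obtain ⟨_, hx, ⟨p, rfl, htp⟩, y, hy, hyA, hadj⟩ := exists_adj_of_induce_connected hs
    (A := {v | ∃ p : Fin (len i), v = inr ⟨i, p⟩ ∧ t ≤ p}) hu ⟨u, rfl, htu⟩ hw
    fun ⟨p, hp, htp⟩ => (hwt p hp).not_ge htp
  obtain z | ⟨j, q⟩ := y
  · obtain ⟨rfl, hp⟩ := adj_inl_inr.1 hadj.symm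
    exact .inr ⟨by omega, hy⟩
  · obtain ⟨rfl, hpq⟩ := adj_inr_inr.1 hadj
    have hqt : (q : ℕ) < t := by_contra fun h => hyA ⟨q, rfl, by omega⟩
    exact .inl ⟨q, by omega, hy⟩

theorem attach_mem_of_induce_connected {s : Finset 𝒱}
    (hs : ((𝒢).induce (s : Set 𝒱)).Connected) {i : Fin k} {u : Fin (len i)}
    (hu : inr ⟨i, u⟩ ∈ s) {w : 𝒱} (hw : w ∈ s) (hwi : ∀ p : Fin (len i), w ≠ inr ⟨i, p⟩) :
    inl (att i) ∈ s := by
  obtain ⟨p, hp, -⟩ | ⟨-, h⟩ :=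
    mem_below_of_induce_connected hs hu (Nat.zero_le _) hw fun p hp => absurd hp (hwi p)
  exacts [absurd hp (by omega), h]

theorem inr_mem_of_induce_connected {s : Finset 𝒱}
    (hs : ((𝒢).induce (s : Set 𝒱)).Connected) {i : Fin k} {p u : Fin (len i)}
    (hu : inr ⟨i, u⟩ ∈ s) (hpu : p < u) {w : 𝒱} (hw : w ∈ s)
    (hwp : ∀ q : Fin (len i), w = inr ⟨i, q⟩ → q ≤ p) :
    inr ⟨i, p⟩ ∈ s := by
  obtain ⟨q, hq, hqs⟩ | ⟨h, -⟩ := mem_below_of_induce_connected hs hu (t := p + 1) hpu hw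
    fun q hq => Nat.lt_succ_of_le (hwp q hq)
  · rwa [Fin.ext (Nat.succ_injective hq)] at hqs
  · omega

theorem exists_eq_pathSegment {s : Finset 𝒱} (hs : ((𝒢).induce (s : Set 𝒱)).Connected)
    (hcyc : ∀ x, inl x ∉ s) :
    ∃ i a b, a ≤ b ∧ b < len i ∧ s = pathSegment i a b := by
  obtain ⟨⟨x | ⟨i, p⟩, hv⟩⟩ := hs.nonempty
  · exact absurd hv (hcyc x)
  have on_path : ∀ w ∈ s, ∃ q : Fin (len i), w = inr ⟨i, q⟩ := fun w hw => by
    by_contra! h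
    exact hcyc _ (attach_mem_of_induce_connected hs hv hw h)
  set P := univ.filter fun q : Fin (len i) => inr ⟨i, q⟩ ∈ s
  have hP : P.Nonempty := ⟨p, by simpa [P] using hv⟩
  have ha : inr ⟨i, P.min' hP⟩ ∈ s := by simpa [P] using P.min'_mem hP
  have hb : inr ⟨i, P.max' hP⟩ ∈ s := by simpa [P] using P.max'_mem hP
  refine ⟨i, P.min' hP, P.max' hP, P.min'_le _ (P.max'_mem hP), (P.max' hP).2, ?_⟩
  ext (x | ⟨j, q⟩)
  · simpa using hcyc x
  rw [inr_mem_pathSegment]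
  constructor
  · intro hq
    obtain ⟨q, ⟨⟩⟩ := on_path _ hq
    have hqP : q ∈ P := by simpa [P] using hq
    exact ⟨rfl, P.min'_le _ hqP, P.le_max' _ hqP⟩
  · rintro ⟨rfl, haq, hqb⟩
    obtain hqb | hqb := (show q ≤ P.max' hP from hqb).eq_or_lt
    · rwa [hqb]
    · exact inr_mem_of_induce_connected hs hb hqb ha fun r hr => by cases hr; exact haq

/-- Collapsing every pendant path onto its attachment vertex retracts `s` onto its cycle part. -/
theorem induce_inl_toLeft_connected {s : Finset 𝒱} (hs : ((𝒢).induce (s : Set 𝒱)).Connected)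
    {x₀ : Fin g} (hx₀ : inl x₀ ∈ s) :
    ((𝒢).induce (inl '' (s.toLeft : Set (Fin g)))).Connected := by
  refine induce_connected_of_retraction (Sum.elim inl fun v => inl (att v.1)) hs ?_
    ⟨_, x₀, by simpa using hx₀, rfl⟩ ?_ ?_ ?_
  · rintro _ ⟨x, hx, rfl⟩
    simpa using hx
  · rintro (x | ⟨i, p⟩) hv
    · exact ⟨x, by simpa using hv, rfl⟩
    · have hatt := attach_mem_of_induce_connected hs hv hx₀ fun _ => inl_ne_inr
      exact ⟨att i, by simpa using hatt, rfl⟩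
  · rintro _ ⟨x, -, rfl⟩
    rfl
  · rintro (x | ⟨i, p⟩) - (y | ⟨j, q⟩) - hxy
    · exact .inr hxy
    · exact .inl (by simpa using (adj_inl_inr.1 hxy).1)
    · exact .inl (by simpa using (adj_inl_inr.1 hxy.symm).1.symm)
    · obtain ⟨rfl, -⟩ := adj_inr_inr.1 hxy
      exact .inl rfl

theorem exists_eq_cycleWithPrefixes {s : Finset 𝒱} (hs : ((𝒢).induce (s : Set 𝒱)).Connected)
    {x₀ : Fin g} (hx₀ : inl x₀ ∈ s) :
    ∃ (S : Finset (Fin g)) (c : Fin k → ℕ), ((𝒢).induce (inl '' (S : Set (Fin g)))).Connected ∧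
      (∀ i, c i ≤ len i ∧ (0 < c i → att i ∈ S)) ∧ s = cycleWithPrefixes S c := by
  have hdown : ∀ i (p q : Fin (len i)), inr ⟨i, q⟩ ∈ s → p ≤ q → inr ⟨i, p⟩ ∈ s := by
    intro i p q hq hpq
    obtain rfl | hpq := hpq.eq_or_lt
    exacts [hq, inr_mem_of_induce_connected hs hq hpq hx₀ fun _ h => absurd h inl_ne_inr]
  let c : Fin k → ℕ := fun i =>
    (univ.filter fun p : Fin (len i) => inr ⟨i, p⟩ ∈ s).sup fun p => (p : ℕ) + 1
  have hc : ∀ i (p : Fin (len i)), inr ⟨i, p⟩ ∈ s ↔ (p : ℕ) < c i := by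
    intro i p
    refine ⟨fun hp => Finset.le_sup (f := fun p : Fin (len i) => (p : ℕ) + 1) (by simpa using hp),
      fun hp => ?_⟩
    obtain ⟨q, hq, hpq⟩ := Finset.lt_sup_iff.1 hp
    exact hdown i p q (by simpa using hq) (Nat.lt_succ_iff.1 hpq)
  refine ⟨s.toLeft, c, induce_inl_toLeft_connected hs hx₀,
    fun i => ⟨Finset.sup_le fun p _ => p.2, fun hi => ?_⟩, ?_⟩
  · obtain ⟨p, hp, -⟩ := Finset.lt_sup_iff.1 hi
    have hp : inr ⟨i, p⟩ ∈ s := by simpa using hp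
    simpa using attach_mem_of_induce_connected hs hp hx₀ fun _ => inl_ne_inr
  · ext (x | ⟨i, p⟩)
    · simp
    · simp [hc]

theorem induce_connected_iff {s : Finset 𝒱} :
    ((𝒢).induce (s : Set 𝒱)).Connected ↔
      (∃ i a b, a ≤ b ∧ b < len i ∧ s = pathSegment i a b) ∨
      ∃ (S : Finset (Fin g)) (c : Fin k → ℕ), ((𝒢).induce (inl '' (S : Set (Fin g)))).Connected ∧
        (∀ i, c i ≤ len i ∧ (0 < c i → att i ∈ S)) ∧ s = cycleWithPrefixes S c := by
  refine ⟨fun hs => ?_, ?_⟩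
  · by_cases hcyc : ∃ x, inl x ∈ s
    · obtain ⟨x₀, hx₀⟩ := hcyc
      exact .inr (exists_eq_cycleWithPrefixes hs hx₀)
    · exact .inl (exists_eq_pathSegment hs (not_exists.1 hcyc))
  · rintro (⟨i, a, b, hab, hb, rfl⟩ | ⟨S, c, hS, hc, rfl⟩)
    exacts [pathSegment_connected hab hb, cycleWithPrefixes_connected hS hc]

variable (len) in
/-- `⟨i, b, a⟩` indexes `pathSegment i a b`. -/
def segmentIndex : Finset (Σ _ : Fin k, Σ _ : ℕ, ℕ) :=
  univ.sigma fun i => (range (len i)).sigma fun b => range (b + 1)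

variable (att len) in
def prefixLengths (S : Finset (Fin g)) : Finset (Fin k → ℕ) :=
  Fintype.piFinset fun i => range (if att i ∈ S then len i + 1 else 1)

variable (att len) in
open Classical in
noncomputable def connectedCycleSets : Finset (Finset (Fin g)) :=
  univ.filter fun S => ((𝒢).induce (inl '' (S : Set (Fin g)))).Connected

theorem mem_prefixLengths {S : Finset (Fin g)} {c : Fin k → ℕ} :
    c ∈ prefixLengths att len S ↔ ∀ i, c i ≤ len i ∧ (0 < c i → att i ∈ S) := by
  simp only [prefixLengths, Fintype.mem_piFinset, mem_range]
  refine forall_congr' fun i => ?_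
  split_ifs with h
  · simp [h]
  · simp [h]; omega

theorem mem_connectedCycleSets {S : Finset (Fin g)} :
    S ∈ connectedCycleSets att len ↔ ((𝒢).induce (inl '' (S : Set (Fin g)))).Connected := by
  simp [connectedCycleSets]

theorem pathSegment_injOn :
    Set.InjOn (fun x : Σ _ : Fin k, Σ _ : ℕ, ℕ => (pathSegment x.1 x.2.2 x.2.1 : Finset 𝒱))
      (segmentIndex len) := by
  rintro ⟨i, b, a⟩ hx ⟨i', b', a'⟩ hx' h
  simp only [segmentIndex, coe_sigma, Set.mem_sigma_iff, mem_coe, mem_univ, mem_range,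
    true_and] at hx hx' h
  have mem := fun v => Finset.ext_iff.1 h v
  have h₁ := (mem (inr ⟨i, ⟨a, by omega⟩⟩)).1 (by simp; omega)
  simp only [inr_mem_pathSegment] at h₁
  obtain ⟨rfl, h₁⟩ := h₁
  have h₂ := (mem (inr ⟨i, ⟨b, hx.1⟩⟩)).1 (by simp; omega)
  have h₃ := (mem (inr ⟨i, ⟨a', by omega⟩⟩)).2 (by simp; omega)
  have h₄ := (mem (inr ⟨i, ⟨b', hx'.1⟩⟩)).2 (by simp; omega)
  simp only [inr_mem_pathSegment, true_and] at h₂ h₃ h₄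
  obtain rfl : a = a' := by omega
  obtain rfl : b = b' := by omega
  rfl

theorem cycleWithPrefixes_injOn (T : Finset (Finset (Fin g))) :
    Set.InjOn (fun x : Σ _ : Finset (Fin g), Fin k → ℕ => (cycleWithPrefixes x.1 x.2 : Finset 𝒱))
      (T.sigma (prefixLengths att len)) := by
  rintro ⟨S, c⟩ hx ⟨S', c'⟩ hx' h
  simp only [coe_sigma, Set.mem_sigma_iff, mem_coe, mem_prefixLengths] at hx hx' h
  have mem := fun v => Finset.ext_iff.1 h v
  obtain rfl : S = S' := Finset.ext fun x => by simpa using mem (inl x)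
  obtain rfl : c = c' := funext fun i => by
    have key : ∀ p : Fin (len i), (p : ℕ) < c i ↔ (p : ℕ) < c' i := fun p => by
      simpa using mem (inr ⟨i, p⟩)
    obtain hlt | heq | hlt := lt_trichotomy (c i) (c' i)
    · exact absurd ((key ⟨c i, hlt.trans_le (hx'.2 i).1⟩).2 hlt) (lt_irrefl _)
    · exact heq
    · exact absurd ((key ⟨c' i, hlt.trans_le (hx.2 i).1⟩).1 hlt) (lt_irrefl _)
  rfl

open Classical in
theorem filter_induce_connected_eq :
    univ.filter (fun s : Finset 𝒱 => s.Nonempty ∧ ((𝒢).induce (s : Set 𝒱)).Connected) =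
      (segmentIndex len).image (fun x => pathSegment x.1 x.2.2 x.2.1) ∪
        ((connectedCycleSets att len).sigma (prefixLengths att len)).image
          fun x => cycleWithPrefixes x.1 x.2 := by
  ext s
  simp only [mem_filter, mem_univ, true_and]
  rw [and_iff_right_of_imp fun h => coe_nonempty.1 (Set.nonempty_coe_sort.1 h.nonempty),
    induce_connected_iff]
  simp [segmentIndex, mem_prefixLengths, mem_connectedCycleSets]
  grind

theorem numCIS_eq :
    numCIS (𝒢) = ∑ i, ∑ b ∈ range (len i), (b + 1) +
      ∑ S ∈ connectedCycleSets att len, ∏ i, if att i ∈ S then len i + 1 else 1 := by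
  classical
  rw [numCIS, Nat.card_eq_fintype_card, Fintype.card_subtype, filter_induce_connected_eq,
    card_union_of_disjoint, card_image_of_injOn pathSegment_injOn,
    card_image_of_injOn (cycleWithPrefixes_injOn _)]
  · simp [segmentIndex, prefixLengths, card_sigma]
  rw [Finset.disjoint_left]
  rintro _ hseg hpre
  obtain ⟨⟨S, c⟩, hSc, rfl⟩ := mem_image.1 hpre
  obtain ⟨⟨_, x, hx, rfl⟩⟩ := (mem_connectedCycleSets.1 (mem_sigma.1 hSc).1).nonempty
  obtain ⟨_, -, heq⟩ := mem_image.1 hseg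
  have hmem : inl x ∈ cycleWithPrefixes (len := len) S c := inl_mem_cycleWithPrefixes.2 hx
  simp [← heq] at hmem

theorem induce_inl_connected_of_adj_or_common_neighbor {S : Finset (Fin g)} (hS : S.Nonempty)
    (h : ∀ x ∈ S, ∀ y ∈ S, x = y ∨ (𝒢).Adj (inl x) (inl y) ∨
      ∃ z ∈ S, (𝒢).Adj (inl x) (inl z) ∧ (𝒢).Adj (inl z) (inl y)) :
    ((𝒢).induce (inl '' (S : Set (Fin g)))).Connected := by
  obtain ⟨x, hx⟩ := hS
  refine induce_connected_of_adj_or_common_neighbor ⟨_, x, hx, rfl⟩ ?_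
  rintro _ ⟨x, hx, rfl⟩ _ ⟨y, hy, rfl⟩
  obtain rfl | hxy | ⟨z, hz, hxz, hzy⟩ := h x hx y hy
  exacts [.inl rfl, .inr (.inl hxy), .inr (.inr ⟨_, ⟨z, hz, rfl⟩, hxz, hzy⟩)]

end

section

variable {k : ℕ} {len : Fin k → ℕ}

set_option synthInstance.maxSize 512 in
theorem induce_inl_connected_iff_three {att : Fin k → Fin 3} (S : Finset (Fin 3)) :
    ((cyclePendants 3 k att len).induce (inl '' (S : Set (Fin 3)))).Connected ↔ S.Nonempty := by
  refine ⟨fun h => ?_, fun hS => induce_inl_connected_of_adj_or_common_neighbor hS ?_⟩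
  · obtain ⟨⟨_, x, hx, rfl⟩⟩ := h.nonempty
    exact ⟨x, hx⟩
  · simp only [adj_inl_inl]
    revert S
    decide

set_option synthInstance.maxSize 512 in
theorem induce_inl_connected_iff_four {att : Fin k → Fin 4} (S : Finset (Fin 4)) :
    ((cyclePendants 4 k att len).induce (inl '' (S : Set (Fin 4)))).Connected ↔
      S.Nonempty ∧ S ≠ {0, 2} ∧ S ≠ {1, 3} := by
  constructor
  · intro h
    refine ⟨?_, ?_, ?_⟩
    · obtain ⟨⟨_, x, hx, rfl⟩⟩ := h.nonempty
      exact ⟨x, hx⟩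
    all_goals
      rintro rfl
      rw [coe_pair, Set.image_pair] at h
      exact not_induce_pair_connected (by simp) (by simp [adj_inl_inl]) h
  · rintro ⟨hS, h₀₂, h₁₃⟩
    refine induce_inl_connected_of_adj_or_common_neighbor hS ?_
    simp only [adj_inl_inl]
    clear hS
    revert S
    decide

theorem connectedCycleSets_three {att : Fin k → Fin 3} :
    connectedCycleSets att len = {{0}, {1}, {2}, {0, 1}, {0, 2}, {1, 2}, {0, 1, 2}} := by
  ext S
  rw [mem_connectedCycleSets, induce_inl_connected_iff_three]
  revert S
  decide

theorem connectedCycleSets_four {att : Fin k → Fin 4} :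
    connectedCycleSets att len =
      {{0}, {1}, {2}, {3}, {0, 1}, {0, 3}, {1, 2}, {2, 3}, {0, 1, 2}, {0, 1, 3}, {0, 2, 3},
        {1, 2, 3}, {0, 1, 2, 3}} := by
  ext S
  rw [mem_connectedCycleSets, induce_inl_connected_iff_four]
  revert S
  decide

end

end cyclePendants

/-- For `n = 4m + 2`, comparing `Δ_{n,n-4}` (triangle with pendant paths of `m, m` new
vertices at `v2`, `m` at `v1`, `m-1` at `v0`) and `Ω_{n,n-4}` (4-cycle with pendant
paths of `m, m, m-1, m-1` new vertices at `v0, v1, v2, v3`):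
`N(Ω) - N(Δ) = m(m² + m - 1) > 0`. -/
theorem numCIS_Omega_sub_Delta_4m2 (m : ℕ) (hm : 1 ≤ m) :
    numCIS (cyclePendants 3 4 ![2, 2, 1, 0] ![m, m, m, m - 1]) <
      numCIS (cyclePendants 4 4 ![0, 1, 2, 3] ![m, m, m - 1, m - 1]) ∧
    numCIS (cyclePendants 4 4 ![0, 1, 2, 3] ![m, m, m - 1, m - 1]) =
      numCIS (cyclePendants 3 4 ![2, 2, 1, 0] ![m, m, m, m - 1]) +
        m * (m * m + m - 1) := by
  obtain ⟨w, rfl⟩ : ∃ w, m = w + 1 := ⟨m - 1, by omega⟩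
  rw [cyclePendants.numCIS_eq, cyclePendants.numCIS_eq, cyclePendants.connectedCycleSets_three,
    cyclePendants.connectedCycleSets_four]
  simp +decide only [Fin.sum_univ_four, Fin.prod_univ_four,
    Matrix.cons_val_zero, Matrix.cons_val_one, Matrix.cons_val_two, Matrix.cons_val_three,
    Matrix.head_cons, Matrix.tail_cons, Nat.add_sub_cancel, sum_insert, mem_insert,
    mem_singleton, sum_singleton, if_true, if_false, sum_range_succ _ w, Nat.add_succ_sub_one]
  generalize ∑ b ∈ range w, (b + 1) = t
  constructor
  · nlinarith
  · ring
end
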